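/- arXiv:1412.2467 — 12 statements merged into one kernel-verified Lean document; each statement's English description precedes it below -/
import Mathlib

section
/- Let A be a commutative unital ring, let π be an ideal of A, and let n ≥ 3. Then the normal elementary subgroup E_n(π) is a normal subgroup of SL_n(A). -/
/-!
Conjugating `e_{ij}(a)` by `s ∈ SL_n(A)` gives `1 + v wᵀ`, where `v` is the `i`-th column of `s`
and `w` is `a` times the `j`-th row of `s⁻¹`; so `v` is unimodular, `w ⬝ v = 0` and `w` has
entries in `π`. Suslin's lemma puts every such `1 + v wᵀ` in `E_n(π)`. On `v^⊥` the map
`w ↦ 1 + v wᵀ` is multiplicative, and if `u ⬝ v = 1` then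
`w = ∑_{k,l} w_k u_l (v_l e_k - v_k e_l)`, so it suffices to treat `w = b (v_l e_k - v_k e_l)`
with `b ∈ π`. Split `v` into its part on `{k, l}` and the rest: the rest contributes a product of
elementary matrices with entries in `π`, and the part `v'` on `{k, l}` contributes the commutator
of `1 + v' e_mᵀ ∈ E_n(A)` and `1 + e_m wᵀ ∈ E_n(π)` for a third index `m`.
-/

open Matrix

/-- `SL n A` is the special linear group `SL_n(A)`. -/
abbrev SL (n : ℕ) (A : Type) [CommRing A] : Type := Matrix.SpecialLinearGroup (Fin n) A

/-- The elementary matrix `e_{ij}(a) = 1_n + a·e_{ij}` as an element of `SL_n(A)` (for `i ≠ j`). -/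
def elem (A : Type) [CommRing A] {n : ℕ} (i j : Fin n) (hij : i ≠ j) (a : A) : SL n A :=
  ⟨Matrix.transvection i j a, Matrix.det_transvection_of_ne i j hij a⟩

/-- The (absolute) elementary subgroup `E_n(A)`: the subgroup of `SL_n(A)` generated by all
elementary matrices. -/
def EgrpAbs (A : Type) [CommRing A] (n : ℕ) : Subgroup (SL n A) :=
  Subgroup.closure {x | ∃ (i j : Fin n) (hij : i ≠ j) (a : A), x = elem A i j hij a}

/-- The normal (relative) elementary subgroup `E_n(π)`: the normal subgroup of `E_n(A)`
generated by the elementary matrices with coefficients in `π`, viewed inside `SL_n(A)`;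
as a subgroup of `SL_n(A)` it is generated by all `E_n(A)`-conjugates of the elementary
matrices with coefficients in `π`. -/
def Egrp (A : Type) [CommRing A] (n : ℕ) (π : Ideal A) : Subgroup (SL n A) :=
  Subgroup.closure {x | ∃ g ∈ EgrpAbs A n, ∃ (i j : Fin n) (hij : i ≠ j), ∃ a ∈ π,
    x = g * elem A i j hij a * g⁻¹}

namespace Matrix

variable {ι κ R : Type*} [DecidableEq ι] [CommRing R]

lemma vecMulVec_single_single (i j : ι) (c d : R) :
    vecMulVec (Pi.single i c) (Pi.single j d) = single i j (c * d) := by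
  ext r s
  simp only [vecMulVec_apply, single_apply, Pi.single_apply]
  split_ifs <;> grind

variable [Fintype ι]

lemma one_add_vecMulVec_mul_one_add_vecMulVec (x y z w : ι → R) :
    (1 + vecMulVec x y) * (1 + vecMulVec z w) =
      1 + vecMulVec x y + vecMulVec z w + vecMulVec x ((y ⬝ᵥ z) • w) := by
  rw [mul_add, add_mul, add_mul, vecMulVec_mul_vecMulVec]
  noncomm_ring

lemma one_add_vecMulVec_add_right {v w₁ : ι → R} (w₂ : ι → R) (h : w₁ ⬝ᵥ v = 0) :
    1 + vecMulVec v (w₁ + w₂) = (1 + vecMulVec v w₁) * (1 + vecMulVec v w₂) := by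
  rw [one_add_vecMulVec_mul_one_add_vecMulVec, h, zero_smul, vecMulVec_zero, add_zero,
    vecMulVec_add, add_assoc]

lemma one_add_vecMulVec_add_left (v₁ : ι → R) {v₂ w : ι → R} (h : w ⬝ᵥ v₂ = 0) :
    1 + vecMulVec (v₁ + v₂) w = (1 + vecMulVec v₁ w) * (1 + vecMulVec v₂ w) := by
  rw [one_add_vecMulVec_mul_one_add_vecMulVec, h, zero_smul, vecMulVec_zero, add_zero,
    add_vecMulVec, add_assoc]

lemma one_add_vecMulVec_sum_right_mem {S : Submonoid (Matrix ι ι R)} {v : ι → R}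
    {t : Finset κ} {F : κ → ι → R} (hF : ∀ p ∈ t, F p ⬝ᵥ v = 0)
    (hS : ∀ p ∈ t, 1 + vecMulVec v (F p) ∈ S) : 1 + vecMulVec v (∑ p ∈ t, F p) ∈ S := by
  classical
  induction t using Finset.induction_on with
  | empty => simp
  | insert a t ha ih =>
    rw [Finset.forall_mem_insert] at hF hS
    rw [Finset.sum_insert ha, one_add_vecMulVec_add_right _ hF.1]
    exact S.mul_mem hS.1 (ih hF.2 hS.2)

lemma one_add_vecMulVec_sum_left_mem {S : Submonoid (Matrix ι ι R)} {w : ι → R}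
    {t : Finset κ} {G : κ → ι → R} (hG : ∀ p ∈ t, w ⬝ᵥ G p = 0)
    (hS : ∀ p ∈ t, 1 + vecMulVec (G p) w ∈ S) : 1 + vecMulVec (∑ p ∈ t, G p) w ∈ S := by
  classical
  induction t using Finset.induction_on with
  | empty => simp
  | insert a t ha ih =>
    rw [Finset.forall_mem_insert] at hG hS
    rw [Finset.sum_insert ha, add_comm (G a), one_add_vecMulVec_add_left _ hG.1]
    exact S.mul_mem (ih hG.2 hS.2) hS.1

/-- With `e = f = e_m`, this exhibits `1 + u wᵀ` as the commutator of `1 + u e_mᵀ` and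
`1 + e_m wᵀ`. -/
lemma one_add_vecMulVec_mul_commutator {u w e f : ι → R} (hwu : w ⬝ᵥ u = 0)
    (hwf : w ⬝ᵥ f = 0) (hef : e ⬝ᵥ f = 1) :
    (1 + vecMulVec u w) * ((1 + vecMulVec f w) * (1 + vecMulVec u e)) =
      (1 + vecMulVec u e) * (1 + vecMulVec f w) := by
  simp only [mul_add, add_mul, mul_one, one_mul, vecMulVec_mul_vecMulVec, hwu, hwf, hef,
    zero_smul, one_smul, vecMulVec_zero, add_zero]
  abel

end Matrix

section SpecialLinearGroup

variable {ι R : Type*} [Fintype ι] [DecidableEq ι] [CommRing R]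

/-- Lets one prove membership in `H` for matrices such as `1 + vecMulVec v w` without first
building them in `SL ι R`. -/
def Subgroup.toMatrixSubmonoid (H : Subgroup (SpecialLinearGroup ι R)) :
    Submonoid (Matrix ι ι R) :=
  H.toSubmonoid.map SpecialLinearGroup.coeMonoidHom

lemma Subgroup.coeMonoidHom_mem_toMatrixSubmonoid {H : Subgroup (SpecialLinearGroup ι R)}
    {g : SpecialLinearGroup ι R} :
    SpecialLinearGroup.coeMonoidHom g ∈ H.toMatrixSubmonoid ↔ g ∈ H :=
  Submonoid.mem_map_iff_mem SpecialLinearGroup.coeMonoidHom_injective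

end SpecialLinearGroup

section ElementarySubgroup

variable {A : Type} [CommRing A] {n : ℕ}

lemma coeMonoidHom_elem (i j : Fin n) (hij : i ≠ j) (a : A) :
    SpecialLinearGroup.coeMonoidHom (elem A i j hij a) = transvection i j a :=
  rfl

lemma elem_mem_EgrpAbs (i j : Fin n) (hij : i ≠ j) (a : A) : elem A i j hij a ∈ EgrpAbs A n :=
  Subgroup.subset_closure ⟨i, j, hij, a, rfl⟩

lemma elem_mem_Egrp {π : Ideal A} (i j : Fin n) (hij : i ≠ j) {a : A} (ha : a ∈ π) :
    elem A i j hij a ∈ Egrp A n π :=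
  Subgroup.subset_closure ⟨1, one_mem _, i, j, hij, a, ha, by group⟩

lemma EgrpAbs_le_normalizer_Egrp (π : Ideal A) :
    EgrpAbs A n ≤ Subgroup.normalizer (Egrp A n π : Set (SL n A)) := by
  refine Subgroup.le_normalizer_closure_iff.2 ?_
  rintro h hh _ ⟨g, hg, i, j, hij, a, ha, rfl⟩
  exact Subgroup.subset_closure ⟨h * g, mul_mem hh hg, i, j, hij, a, ha, by group⟩

/-- `1 + x wᵀ` is a product of the elementary matrices `e_{rs}(x_r w_s)`; the condition
`x r * w r = 0` kills the diagonal factors. -/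
lemma one_add_vecMulVec_mem_of_mul_eq_zero {H : Subgroup (SL n A)} {I : Ideal A}
    (hH : ∀ i j (hij : i ≠ j), ∀ a ∈ I, elem A i j hij a ∈ H) {x w : Fin n → A}
    (hxw : ∀ r, x r * w r = 0) (hw : ∀ s, w s ∈ I) :
    1 + vecMulVec x w ∈ H.toMatrixSubmonoid := by
  rw [← Finset.univ_sum_single x]
  refine one_add_vecMulVec_sum_left_mem (fun r _ => ?_) fun r _ => ?_
  · rw [dotProduct_single, mul_comm, hxw]
  rw [← Finset.univ_sum_single w]
  refine one_add_vecMulVec_sum_right_mem (fun s _ => ?_) fun s _ => ?_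
  · rw [single_dotProduct, Pi.single_apply]
    split_ifs with hsr
    · rw [hsr, mul_comm, hxw]
    · rw [mul_zero]
  rw [vecMulVec_single_single]
  by_cases hrs : r = s
  · rw [hrs, hxw, single_zero, add_zero]
    exact one_mem _
  · rw [← transvection, ← coeMonoidHom_elem r s hrs]
    exact Subgroup.coeMonoidHom_mem_toMatrixSubmonoid.2 (hH r s hrs _ (I.mul_mem_left _ (hw s)))

lemma one_add_vecMulVec_mem_EgrpAbs {x w : Fin n → A} (hxw : ∀ r, x r * w r = 0) :
    1 + vecMulVec x w ∈ (EgrpAbs A n).toMatrixSubmonoid :=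
  one_add_vecMulVec_mem_of_mul_eq_zero (I := ⊤) (fun i j hij a _ => elem_mem_EgrpAbs i j hij a)
    hxw fun _ => Submodule.mem_top

lemma one_add_vecMulVec_mem_Egrp {π : Ideal A} {x w : Fin n → A} (hxw : ∀ r, x r * w r = 0)
    (hw : ∀ s, w s ∈ π) : 1 + vecMulVec x w ∈ (Egrp A n π).toMatrixSubmonoid :=
  one_add_vecMulVec_mem_of_mul_eq_zero (fun i j hij _ ha => elem_mem_Egrp i j hij ha) hxw hw

lemma one_add_vecMulVec_mem_Egrp_of_apply_eq_zero {π : Ideal A} {u w : Fin n → A} {m : Fin n}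
    (hu : u m = 0) (hw : w m = 0) (hwu : w ⬝ᵥ u = 0) (hwπ : ∀ s, w s ∈ π) :
    1 + vecMulVec u w ∈ (Egrp A n π).toMatrixSubmonoid := by
  have he : ∀ (v : Fin n → A), v m = 0 → ∀ r, v r * (Pi.single m 1 : Fin n → A) r = 0 := by
    intro v hv r
    rw [Pi.single_apply]
    split_ifs with hr <;> simp [hr, hv]
  obtain ⟨X, hX, hXu⟩ := one_add_vecMulVec_mem_EgrpAbs (he u hu)
  obtain ⟨Y, hY, hYw⟩ := one_add_vecMulVec_mem_Egrp (x := Pi.single m 1)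
    (fun r => by rw [mul_comm]; exact he w hw r) hwπ
  let φ := SpecialLinearGroup.coeMonoidHom (ι := Fin n) (R := A)
  have hcomm : (1 + vecMulVec u w) * φ (Y * X) = φ (X * Y) := by
    rw [map_mul, map_mul, hXu, hYw]
    exact one_add_vecMulVec_mul_commutator hwu (by rw [dotProduct_single, hw, zero_mul])
      (by rw [dotProduct_single, Pi.single_eq_same, one_mul])
  have heq : 1 + vecMulVec u w = φ (X * Y * X⁻¹ * Y⁻¹) := by
    rw [show X * Y * X⁻¹ * Y⁻¹ = X * Y * (Y * X)⁻¹ by group, map_mul, ← hcomm, mul_assoc,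
      ← map_mul, mul_inv_cancel, map_one, mul_one]
  rw [heq]
  exact Submonoid.mem_map_of_mem _ <|
    Subgroup.mul_mem _ (Subgroup.le_normalizer_iff.1 (EgrpAbs_le_normalizer_Egrp π) X hX Y hY)
      (Subgroup.inv_mem _ hY)

lemma one_add_vecMulVec_smul_sub_single_mem_Egrp (hn : 3 ≤ n) {π : Ideal A} {b : A} (hb : b ∈ π)
    (v : Fin n → A) (k l : Fin n) :
    1 + vecMulVec v (b • (Pi.single k (v l) - Pi.single l (v k))) ∈
      (Egrp A n π).toMatrixSubmonoid := by
  obtain rfl | hkl := eq_or_ne k l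
  · rw [sub_self, smul_zero, vecMulVec_zero, add_zero]
    exact one_mem _
  obtain ⟨m, -, hm⟩ := Finset.exists_mem_notMem_of_card_lt_card (s := {k, l})
    (t := Finset.univ) (Finset.card_le_two.trans_lt (by simp; omega))
  rw [Finset.mem_insert, Finset.mem_singleton, not_or] at hm
  set w : Fin n → A := b • (Pi.single k (v l) - Pi.single l (v k))
  set v₂ : Fin n → A := Pi.single k (v k) + Pi.single l (v l)
  have hwv₂ : w ⬝ᵥ v₂ = 0 := by
    simp only [w, v₂, smul_dotProduct, sub_dotProduct, dotProduct_add, single_dotProduct,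
      Pi.single_eq_same, Pi.single_eq_of_ne hkl, Pi.single_eq_of_ne hkl.symm, mul_zero, smul_eq_mul]
    ring
  have hwπ : ∀ s, w s ∈ π := fun s => π.mul_mem_right _ hb
  rw [← sub_add_cancel v v₂, one_add_vecMulVec_add_left _ hwv₂]
  refine mul_mem (one_add_vecMulVec_mem_Egrp (fun r => ?_) hwπ)
    (one_add_vecMulVec_mem_Egrp_of_apply_eq_zero (m := m) ?_ ?_ hwv₂ hwπ)
  · by_cases hrk : r = k
    · simp [hrk, v₂, Pi.single_eq_of_ne hkl]
    by_cases hrl : r = l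
    · simp [hrl, v₂, Pi.single_eq_of_ne hkl.symm]
    · simp [w, Pi.single_eq_of_ne hrk, Pi.single_eq_of_ne hrl]
  · simp [v₂, Pi.single_eq_of_ne hm.1, Pi.single_eq_of_ne hm.2]
  · simp [w, Pi.single_eq_of_ne hm.1, Pi.single_eq_of_ne hm.2]

lemma eq_sum_smul_single_sub_single {u v w : Fin n → A} (huv : u ⬝ᵥ v = 1)
    (hwv : w ⬝ᵥ v = 0) :
    w = ∑ p : Fin n × Fin n, (w p.1 * u p.2) • (Pi.single p.1 (v p.2) - Pi.single p.2 (v p.1)) := by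
  ext r
  simp only [Finset.sum_apply, Pi.smul_apply, Pi.sub_apply, smul_eq_mul, mul_sub,
    Finset.sum_sub_distrib, Fintype.sum_prod_type, Pi.single_apply, mul_ite, mul_zero,
    Finset.sum_ite_irrel, Finset.sum_const_zero, Finset.sum_ite_eq, Finset.mem_univ, if_true]
  have hsum : ∑ x, w r * u x * v x - ∑ x, w x * u r * v x =
      w r * (u ⬝ᵥ v) - u r * (w ⬝ᵥ v) := by
    simp only [dotProduct, Finset.mul_sum]
    congr 1 <;> exact Finset.sum_congr rfl fun _ _ => by ring
  rw [hsum, huv, hwv, mul_one, mul_zero, sub_zero]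

lemma one_add_vecMulVec_mem_Egrp_of_dotProduct_eq_one (hn : 3 ≤ n) {π : Ideal A}
    {u v w : Fin n → A} (huv : u ⬝ᵥ v = 1) (hwv : w ⬝ᵥ v = 0) (hwπ : ∀ s, w s ∈ π) :
    1 + vecMulVec v w ∈ (Egrp A n π).toMatrixSubmonoid := by
  rw [eq_sum_smul_single_sub_single huv hwv]
  refine one_add_vecMulVec_sum_right_mem (fun p _ => ?_) fun p _ =>
    one_add_vecMulVec_smul_sub_single_mem_Egrp hn (π.mul_mem_right _ (hwπ p.1)) v p.1 p.2
  rw [smul_dotProduct, sub_dotProduct, single_dotProduct, single_dotProduct, mul_comm (v p.2),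
    sub_self, smul_zero]

lemma conj_elem_mem_Egrp (hn : 3 ≤ n) {π : Ideal A} (s : SL n A) (i j : Fin n) (hij : i ≠ j)
    {a : A} (ha : a ∈ π) : s * elem A i j hij a * s⁻¹ ∈ Egrp A n π := by
  let φ := SpecialLinearGroup.coeMonoidHom (ι := Fin n) (R := A)
  have hST : φ s * φ s⁻¹ = 1 := by rw [← map_mul, mul_inv_cancel, map_one]
  have hTS : φ s⁻¹ * φ s = 1 := by rw [← map_mul, inv_mul_cancel, map_one]
  rw [← Subgroup.coeMonoidHom_mem_toMatrixSubmonoid, map_mul, map_mul, coeMonoidHom_elem,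
    transvection, ← one_mul a, ← vecMulVec_single_single, mul_add, add_mul, mul_one, hST,
    mul_vecMulVec, vecMulVec_mul]
  refine one_add_vecMulVec_mem_Egrp_of_dotProduct_eq_one hn (u := Pi.single i 1 ᵥ* φ s⁻¹) ?_ ?_
    fun r => ?_
  · rw [dotProduct_mulVec, vecMul_vecMul, hTS, vecMul_one, dotProduct_single, Pi.single_eq_same,
      mul_one]
  · rw [dotProduct_mulVec, vecMul_vecMul, hTS, vecMul_one, dotProduct_single,
      Pi.single_eq_of_ne hij, zero_mul]
  · rw [single_vecMul, Pi.smul_apply, smul_eq_mul]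
    exact π.mul_mem_right _ ha

end ElementarySubgroup

/-- **Suslin's relative normality theorem.** For a commutative unital ring `A`, an ideal `π`
of `A` and `n ≥ 3`, the normal elementary subgroup `E_n(π)` is normal in `SL_n(A)`. -/
theorem suslin_normality (A : Type) [CommRing A] (π : Ideal A) (n : ℕ) (hn : 3 ≤ n) :
    (Egrp A n π).Normal := by
  rw [← Subgroup.normalizer_eq_top_iff, eq_top_iff, Egrp, Subgroup.le_normalizer_closure_iff]
  rintro s - _ ⟨g, -, i, j, hij, a, ha, rfl⟩
  rw [show s * (g * elem A i j hij a * g⁻¹) * s⁻¹ = s * g * elem A i j hij a * (s * g)⁻¹ by group]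
  exact conj_elem_mem_Egrp hn (s * g) i j hij ha
end

section
/- Let A be a commutative unital ring, let π be an ideal of A, and let n ≥ 3. Then the true elementary subgroup F_n(π) is a normal subgroup of Ω_n(π) = {g ∈ SL_n(A) : all off-diagonal entries of g lie in π}. -/
open Matrix

/-- The true elementary subgroup `F_n(π)`: the subgroup of `SL_n(A)` generated by the
elementary matrices with coefficients in the ideal `π`. -/
def Fgrp (A : Type) [CommRing A] (n : ℕ) (π : Ideal A) : Subgroup (SL n A) :=
  Subgroup.closure {x | ∃ (i j : Fin n) (hij : i ≠ j), ∃ a ∈ π, x = elem A i j hij a}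

/-- `Ω_n(π) = {g ∈ SL_n(A) : g mod π is diagonal}`: the set of matrices in `SL_n(A)` all of
whose off-diagonal entries lie in `π`. -/
def Ωset (A : Type) [CommRing A] (n : ℕ) (π : Ideal A) : Set (SL n A) :=
  {g | ∀ p q : Fin n, p ≠ q → (g : Matrix (Fin n) (Fin n) A) p q ∈ π}

/-!
Write `g e_{ij}(a) g⁻¹ = 1 + v ⊗ a w`, where `v` is the `i`-th column of `g` and `w` the `j`-th
row of `g⁻¹`; with `c` the `i`-th row of `g⁻¹` we have `c ⬝ v = 1` and `w ⬝ v = 0`, so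
`a w = ∑_{k,l} a c_k w_l (v_k e_l - v_l e_k)`. Matrices `1 + v ⊗ y` with `y ⬝ v = 0` multiply by
adding the rows `y`, so it suffices to treat one summand. For `k ≠ l` one of `v_k, v_l` lies in
`π`, because `g` is diagonal modulo `π`. Splitting `v` in the same way, the coordinates of `v`
outside `{k, l}` contribute elementary matrices with entries in `π`, and the `{k, l}`-part is an
explicit product of elementary matrices with entries in `π` once a third index is available,
which is where `n ≥ 3` enters.
-/

namespace TrueElementary

section Diagonal

variable {ι R : Type*} [Fintype ι] [DecidableEq ι] [CommRing R]

theorem isDiag_mul {X Y : Matrix ι ι R} (hX : X.IsDiag) (hY : Y.IsDiag) : (X * Y).IsDiag := by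
  rw [← hX.diagonal_diag, ← hY.diagonal_diag, diagonal_mul_diagonal]
  exact isDiag_diagonal _

theorem isDiag_adjugate {X : Matrix ι ι R} (hX : X.IsDiag) : X.adjugate.IsDiag := by
  rw [← hX.diagonal_diag, adjugate_diagonal]
  exact isDiag_diagonal _

variable (ι R) in
def diagonalSubgroup : Subgroup (SpecialLinearGroup ι R) where
  carrier := {g | (g : Matrix ι ι R).IsDiag}
  one_mem' := isDiag_one
  mul_mem' hg hh := isDiag_mul hg hh
  inv_mem' {g} (hg : (g : Matrix ι ι R).IsDiag) := by
    simpa [SpecialLinearGroup.coe_inv] using isDiag_adjugate hg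

end Diagonal

section RankOne

variable {ι κ R : Type*} [DecidableEq ι] [DecidableEq κ] [CommRing R]

theorem vecMulVec_piSingle_piSingle (i j : ι) (a c : R) :
    vecMulVec (Pi.single i a) (Pi.single j c) = single i j (a * c) := by
  ext p q
  simp only [single_apply, vecMulVec_apply, Pi.single_apply]
  split_ifs <;> simp_all

theorem one_add_vecMulVec_mul_one_add_vecMulVec [Fintype ι] (x y x' y' : ι → R) :
    (1 + vecMulVec x y) * (1 + vecMulVec x' y') =
      1 + vecMulVec x y + vecMulVec x' y' + vecMulVec x ((y ⬝ᵥ x') • y') := by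
  rw [mul_add, add_mul, add_mul, one_mul, mul_one, one_mul, vecMulVec_mul_vecMulVec]
  abel

theorem mul_transvection_mul_of_mul_eq_one [Fintype ι] {G G' : Matrix ι ι R} (h : G * G' = 1)
    (i j : ι) (a : R) :
    G * transvection i j a * G' = 1 + vecMulVec (G.col i) (a • G'.row j) := by
  have hs : single i j a = vecMulVec (Pi.single i 1) (Pi.single j a) := by
    rw [vecMulVec_piSingle_piSingle, one_mul]
  rw [transvection, hs, mul_add, add_mul, mul_one, h, mul_vecMulVec, vecMulVec_mul,
    mulVec_single_one, single_vecMul]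

theorem sum_sum_smul_pair [Fintype ι] (c w v : ι → R) :
    ∑ k, ∑ l, (c k * w l) • (Pi.single l (v k) - Pi.single k (v l) : ι → R) =
      (c ⬝ᵥ v) • w - (w ⬝ᵥ v) • c := by
  ext q
  simp [Finset.sum_apply, Pi.single_apply, mul_sub, Finset.sum_sub_distrib, dotProduct,
    Finset.sum_mul]
  congr 1 <;> exact Finset.sum_congr rfl fun _ _ => by ring

variable (e : ι ↪ κ)

theorem extendByZero_piSingle (i : ι) (c : R) :
    Function.ExtendByZero.linearMap R e (Pi.single i c) = Pi.single (e i) c := by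
  funext p
  change Function.extend e (Pi.single i c) 0 p = _
  by_cases hp : ∃ a, e a = p
  · obtain ⟨a, rfl⟩ := hp
    simp [e.injective.extend_apply, Pi.single_apply]
  · rw [Function.extend_apply' _ _ _ hp, Pi.zero_apply, Pi.single_eq_of_ne]
    exact fun h => hp ⟨i, h.symm⟩

variable [Fintype ι] [Fintype κ]

noncomputable def blockEquiv : ι ⊕ ↥(Set.range e)ᶜ ≃ κ :=
  (Equiv.sumCongr (Equiv.ofInjective e e.injective) (Equiv.refl _)).trans
    (Equiv.Set.sumCompl (Set.range e))

/-- `X ↦ X ⊕ 1`, with `X` placed on the rows and columns indexed by `e`. -/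
noncomputable def blockEmbedding : Matrix ι ι R →* Matrix κ κ R where
  toFun X := (fromBlocks X 0 0 1).submatrix (blockEquiv e).symm (blockEquiv e).symm
  map_one' := by rw [fromBlocks_one, submatrix_one_equiv]
  map_mul' X Y := by
    rw [submatrix_mul_equiv, fromBlocks_multiply]
    simp

theorem blockEmbedding_one_add_vecMulVec (u w : ι → R) :
    blockEmbedding e (1 + vecMulVec u w) =
      1 + vecMulVec (Function.ExtendByZero.linearMap R e u)
        (Function.ExtendByZero.linearMap R e w) := by
  ext p q
  obtain ⟨s, rfl⟩ := (blockEquiv e).surjective p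
  obtain ⟨t, rfl⟩ := (blockEquiv e).surjective q
  have hout (x : ↥(Set.range e)ᶜ) (v : ι → R) : Function.extend e v 0 x = 0 :=
    Function.extend_apply' _ _ _ x.2
  have hext (v : ι → R) : Function.ExtendByZero.linearMap R e v = Function.extend e v 0 := rfl
  simp only [hext, blockEmbedding, MonoidHom.coe_mk, OneHom.coe_mk, submatrix_apply,
    Equiv.symm_apply_apply, Matrix.add_apply, one_apply, (blockEquiv e).injective.eq_iff,
    vecMulVec_apply]
  rcases s with i | x <;> rcases t with j | y <;>
    simp [blockEquiv, e.injective.extend_apply, hout, one_apply, vecMulVec_apply]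

theorem blockEmbedding_transvection (i j : ι) (c : R) :
    blockEmbedding e (transvection i j c) = transvection (e i) (e j) c := by
  rw [transvection, transvection, ← one_mul c, ← vecMulVec_piSingle_piSingle,
    blockEmbedding_one_add_vecMulVec, extendByZero_piSingle, extendByZero_piSingle,
    vecMulVec_piSingle_piSingle]

end RankOne

variable {A : Type} [CommRing A] {π : Ideal A} {n : ℕ}

variable (π n) in
def Ωgrp : Subgroup (SL n A) :=
  (diagonalSubgroup (Fin n) (A ⧸ π)).comap (SpecialLinearGroup.map (Ideal.Quotient.mk π))

variable (π n) in
theorem coe_Ωgrp : (Ωgrp π n : Set (SL n A)) = Ωset A n π := by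
  ext g
  simp [Ωgrp, diagonalSubgroup, IsDiag, Ωset, Pairwise, Ideal.Quotient.eq_zero_iff_mem]

variable (π n) in
theorem Fgrp_le_Ωgrp : Fgrp A n π ≤ Ωgrp π n := by
  rw [Fgrp, Subgroup.closure_le, coe_Ωgrp]
  rintro _ ⟨i, j, hij, a, ha, rfl⟩ p q hpq
  change (1 + single i j a) p q ∈ π
  rw [Matrix.add_apply, one_apply_ne hpq, zero_add, single_apply]
  split_ifs
  exacts [ha, π.zero_mem]

variable (π n) in
/-- Working with matrices rather than in `SL n A` spares a determinant proof for every explicit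
factor. -/
def Fmat : Submonoid (Matrix (Fin n) (Fin n) A) :=
  (Fgrp A n π).toSubmonoid.map SpecialLinearGroup.coeMonoidHom

theorem transvection_mem_Fmat {i j : Fin n} (hij : i ≠ j) {c : A} (hc : c ∈ π) :
    transvection i j c ∈ Fmat π n :=
  ⟨elem A i j hij c, Subgroup.subset_closure ⟨i, j, hij, c, hc, rfl⟩, rfl⟩

theorem mem_Fmat_of_mul_eq_one {M N : Matrix (Fin n) (Fin n) A} (hM : M ∈ Fmat π n)
    (hMN : M * N = 1) : N ∈ Fmat π n := by
  obtain ⟨h, hh, rfl⟩ := hM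
  refine ⟨h⁻¹, (Fgrp A n π).inv_mem hh, ?_⟩
  calc SpecialLinearGroup.coeMonoidHom h⁻¹
      = SpecialLinearGroup.coeMonoidHom h⁻¹ * (SpecialLinearGroup.coeMonoidHom h * N) := by
        rw [hMN, mul_one]
    _ = N := by rw [← mul_assoc, ← map_mul, inv_mul_cancel, map_one, one_mul]

theorem mem_Fgrp_of_coe_mem_Fmat {g : SL n A} (hg : (g : Matrix (Fin n) (Fin n) A) ∈ Fmat π n) :
    g ∈ Fgrp A n π := by
  obtain ⟨h, hh, he⟩ := hg
  rwa [SpecialLinearGroup.coeMonoidHom_injective he] at hh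

theorem blockEmbedding_mem_Fmat {m : ℕ} (e : Fin m ↪ Fin n) {M : Matrix (Fin m) (Fin m) A}
    (hM : M ∈ Fmat π m) : blockEmbedding e M ∈ Fmat π n := by
  obtain ⟨h, hh, rfl⟩ := hM
  induction hh using Subgroup.closure_induction with
  | mem _ hx =>
    obtain ⟨i, j, hij, c, hc, rfl⟩ := hx
    exact (blockEmbedding_transvection e i j c).symm ▸
      transvection_mem_Fmat (e.injective.ne hij) hc
  | one => simp [(Fmat π n).one_mem]
  | mul x y _ _ hx hy => simpa using mul_mem hx hy
  | inv x _ hx =>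
    refine mem_Fmat_of_mul_eq_one hx ?_
    rw [← map_mul, ← map_mul, mul_inv_cancel, map_one, map_one]

/-- Every factor has its entry in `π` as soon as `t, b ∈ π`, although `a` is arbitrary. -/
theorem one_add_vecMulVec_eq_prod_transvection (t a b : A) :
    (1 : Matrix (Fin 3) (Fin 3) A) + vecMulVec (Pi.single 0 a + Pi.single 1 b)
        (t • (Pi.single 1 a - Pi.single 0 b)) =
      transvection 1 2 (-b) * transvection 0 1 (t * a ^ 2) * transvection 2 1 (-(t * a)) *
        transvection 0 1 (-(t * a)) * transvection 2 1 t * transvection 1 2 (a * b) *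
        transvection 1 0 b * transvection 2 1 (-t) * transvection 0 1 (t * a) *
        transvection 1 2 (-(a * b)) * transvection 1 0 (-b) * transvection 1 2 b *
        transvection 2 1 (t * a) * transvection 2 0 (-(t * b)) := by
  have hT (i j : Fin 3) (c : A) : transvection i j c =
      (fun E : Fin 3 → Fin 3 → A => !![E 0 0, E 0 1, E 0 2; E 1 0, E 1 1, E 1 2; E 2 0, E 2 1, E 2 2])
        fun p q => (if p = q then 1 else 0) + if i = p ∧ j = q then c else 0 := by
    ext p q
    fin_cases p <;> fin_cases q <;> simp [transvection, one_apply, single_apply]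
  simp only [hT, Fin.isValue, Fin.reduceEq, if_true, if_false, and_true, and_false]
  simp only [mul_fin_three]
  ext p q
  fin_cases p <;> fin_cases q <;> simp [vecMulVec_apply, one_apply] <;> ring

theorem one_add_vecMulVec_mem_Fmat_three {t b : A} (ht : t ∈ π) (hb : b ∈ π) (a : A) :
    1 + vecMulVec (Pi.single 0 a + Pi.single 1 b) (t • (Pi.single 1 a - Pi.single 0 b)) ∈
      Fmat π 3 := by
  rw [one_add_vecMulVec_eq_prod_transvection]
  repeat' refine mul_mem ?_ ?_
  all_goals refine transvection_mem_Fmat (by decide) ?_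
  all_goals simp [ht, hb, Ideal.mul_mem_left, Ideal.mul_mem_right]

theorem one_add_vecMulVec_plane_mem_Fmat (hn : 3 ≤ n) {k l : Fin n} (hkl : k ≠ l) {t b : A}
    (ht : t ∈ π) (hb : b ∈ π) (a : A) :
    1 + vecMulVec (Pi.single k a + Pi.single l b) (t • (Pi.single l a - Pi.single k b)) ∈
      Fmat π n := by
  obtain ⟨m, hmk, hml⟩ := Fin.exists_ne_and_ne_of_two_lt k l hn
  let e : Fin 3 ↪ Fin n := ⟨![k, l, m], by
    intro p q hpq
    fin_cases p <;> fin_cases q <;> simp_all [eq_comm]⟩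
  have h3 := blockEmbedding_mem_Fmat e (one_add_vecMulVec_mem_Fmat_three ht hb a)
  rwa [blockEmbedding_one_add_vecMulVec, map_add, map_smul, map_sub, extendByZero_piSingle,
    extendByZero_piSingle, extendByZero_piSingle, extendByZero_piSingle] at h3

variable (π) in
def rankOneRows (v : Fin n → A) : AddSubmonoid (Fin n → A) where
  carrier := {y | y ⬝ᵥ v = 0 ∧ 1 + vecMulVec v y ∈ Fmat π n}
  zero_mem' := ⟨zero_dotProduct v, by simp [(Fmat π n).one_mem]⟩
  add_mem' {y y'} hy hy' := by
    refine ⟨by rw [add_dotProduct, hy.1, hy'.1, add_zero], ?_⟩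
    have h := mul_mem hy.2 hy'.2
    rwa [one_add_vecMulVec_mul_one_add_vecMulVec, hy.1, zero_smul, vecMulVec_zero, add_zero,
      add_assoc, ← vecMulVec_add] at h

variable (π) in
def rankOneCols (y : Fin n → A) : AddSubmonoid (Fin n → A) where
  carrier := {x | y ⬝ᵥ x = 0 ∧ 1 + vecMulVec x y ∈ Fmat π n}
  zero_mem' := ⟨dotProduct_zero y, by simp [(Fmat π n).one_mem]⟩
  add_mem' {x x'} hx hx' := by
    refine ⟨by rw [dotProduct_add, hx.1, hx'.1, add_zero], ?_⟩
    have h := mul_mem hx.2 hx'.2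
    rwa [one_add_vecMulVec_mul_one_add_vecMulVec, hx'.1, zero_smul, vecMulVec_zero, add_zero,
      add_assoc, ← add_vecMulVec] at h

theorem mem_rankOneRows_iff_mem_rankOneCols {x y : Fin n → A} :
    y ∈ rankOneRows π x ↔ x ∈ rankOneCols π y :=
  Iff.rfl

theorem single_mem_rankOneCols {y : Fin n → A} {r : Fin n} (hr : y r = 0) (hy : ∀ q, y q ∈ π)
    (c : A) : Pi.single r c ∈ rankOneCols π y := by
  rw [← mem_rankOneRows_iff_mem_rankOneCols, ← Finset.univ_sum_single y]
  refine sum_mem fun q _ => ?_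
  obtain rfl | hrq := eq_or_ne r q
  · rw [hr, Pi.single_zero]
    exact zero_mem _
  · refine ⟨by simp [hrq.symm], ?_⟩
    rw [vecMulVec_piSingle_piSingle]
    exact transvection_mem_Fmat hrq (π.mul_mem_left c (hy q))

theorem mem_rankOneCols_of_disjoint {x y : Fin n → A} (hxy : ∀ r, x r = 0 ∨ y r = 0)
    (hy : ∀ q, y q ∈ π) : x ∈ rankOneCols π y := by
  rw [← Finset.univ_sum_single x]
  refine sum_mem fun r _ => ?_
  rcases hxy r with hx | hyr
  · rw [hx, Pi.single_zero]
    exact zero_mem _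
  · exact single_mem_rankOneCols hyr hy _

theorem smul_pair_mem_rankOneRows (hn : 3 ≤ n) {v : Fin n → A} {k l : Fin n} (hkl : k ≠ l)
    (hv : v k ∈ π ∨ v l ∈ π) {t : A} (ht : t ∈ π) :
    t • (Pi.single l (v k) - Pi.single k (v l) : Fin n → A) ∈ rankOneRows π v := by
  wlog hvl : v l ∈ π generalizing k l t
  · convert this hkl.symm hv.symm (π.neg_mem ht) (hv.resolve_right hvl) using 1
    rw [neg_smul, ← smul_neg, neg_sub]
  set y := t • (Pi.single l (v k) - Pi.single k (v l) : Fin n → A)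
  set x₀ := (Pi.single k (v k) + Pi.single l (v l) : Fin n → A)
  have hy : ∀ q, y q ∈ π := fun q => π.mul_mem_right _ ht
  have h₀ : x₀ ∈ rankOneCols π y :=
    ⟨by simp [y, x₀, hkl, hkl.symm]; ring, one_add_vecMulVec_plane_mem_Fmat hn hkl ht hvl _⟩
  have h₁ : v - x₀ ∈ rankOneCols π y := by
    refine mem_rankOneCols_of_disjoint (fun r => ?_) hy
    by_cases hrk : r = k
    · subst hrk; simp [x₀, hkl]
    by_cases hrl : r = l
    · subst hrl; simp [x₀, hkl]
    · simp [y, hrk, hrl]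
  rw [mem_rankOneRows_iff_mem_rankOneCols, ← add_sub_cancel x₀ v]
  exact add_mem h₀ h₁

theorem conj_elem_mem_Fgrp (hn : 3 ≤ n) {g : SL n A} (hg : g ∈ Ωset A n π) {i j : Fin n}
    (hij : i ≠ j) {a : A} (ha : a ∈ π) : g * elem A i j hij a * g⁻¹ ∈ Fgrp A n π := by
  set G := (g : Matrix (Fin n) (Fin n) A)
  set G' := ((g⁻¹ : SL n A) : Matrix (Fin n) (Fin n) A)
  have hGG' : G * G' = 1 := congrArg Subtype.val (mul_inv_cancel g)
  have hG'G : G' * G = 1 := congrArg Subtype.val (inv_mul_cancel g)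
  have hcv : G'.row i ⬝ᵥ G.col i = 1 := by
    change (G' * G) i i = 1
    rw [hG'G, one_apply_eq]
  have hwv : G'.row j ⬝ᵥ G.col i = 0 := by
    change (G' * G) j i = 0
    rw [hG'G, one_apply_ne hij.symm]
  have hrow : a • G'.row j = ∑ k, ∑ l, (a * (G'.row i k * G'.row j l)) •
      (Pi.single l (G.col i k) - Pi.single k (G.col i l) : Fin n → A) := by
    calc a • G'.row j
        = a • ((G'.row i ⬝ᵥ G.col i) • G'.row j - (G'.row j ⬝ᵥ G.col i) • G'.row i) := by
          rw [hcv, hwv, one_smul, zero_smul, sub_zero]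
      _ = _ := by simp_rw [← sum_sum_smul_pair, Finset.smul_sum, smul_smul]
  apply mem_Fgrp_of_coe_mem_Fmat
  change G * transvection i j a * G' ∈ _
  rw [mul_transvection_mul_of_mul_eq_one hGG', hrow]
  refine (sum_mem fun k _ => sum_mem fun l _ => ?_ : _ ∈ rankOneRows π (G.col i)).2
  obtain rfl | hkl := eq_or_ne k l
  · simp [zero_mem]
  refine smul_pair_mem_rankOneRows hn hkl ?_ (π.mul_mem_right _ ha)
  by_cases hki : k = i
  · exact .inr (hg l i (hki ▸ hkl.symm))
  · exact .inl (hg k i hki)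

theorem conj_mem_Fgrp (hn : 3 ≤ n) {g : SL n A} (hg : g ∈ Ωset A n π) {x : SL n A}
    (hx : x ∈ Fgrp A n π) : g * x * g⁻¹ ∈ Fgrp A n π := by
  have hconj : (Fgrp A n π).map (MulAut.conj g).toMonoidHom ≤ Fgrp A n π := by
    rw [Fgrp, MonoidHom.map_closure, Subgroup.closure_le]
    rintro _ ⟨_, ⟨i, j, hij, a, ha, rfl⟩, rfl⟩
    exact conj_elem_mem_Fgrp hn hg hij ha
  exact hconj ⟨x, hx, rfl⟩

end TrueElementary

/-- **Main theorem.** For a commutative unital ring `A`, an ideal `π` of `A` and `n ≥ 3`,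
the true elementary subgroup `F_n(π)` is a normal subgroup of
`Ω_n(π) = {g ∈ SL_n(A) : g mod π is diagonal}`: the set `Ω_n(π)` is (the carrier of) a
subgroup of `SL_n(A)` containing `F_n(π)`, and `F_n(π)` is stable under conjugation by the
elements of `Ω_n(π)`. -/
theorem trueElementary_normal_in_Omega (A : Type) [CommRing A] (π : Ideal A) (n : ℕ)
    (hn : 3 ≤ n) :
    ∃ O : Subgroup (SL n A), (O : Set (SL n A)) = Ωset A n π ∧
      Fgrp A n π ≤ O ∧ ∀ g ∈ O, ∀ x ∈ Fgrp A n π, g * x * g⁻¹ ∈ Fgrp A n π := by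
  refine ⟨TrueElementary.Ωgrp π n, TrueElementary.coe_Ωgrp π n,
    TrueElementary.Fgrp_le_Ωgrp π n, fun g hg x hx => ?_⟩
  rw [← SetLike.mem_coe, TrueElementary.coe_Ωgrp] at hg
  exact TrueElementary.conj_mem_Fgrp hn hg hx
end

section
/- Let A be a commutative unital ring, let π be an ideal of A, and let n ≥ 3. Then E_n(π²) is contained in F_n(π), where π² is the product ideal. -/
open Matrix

/-!
For an ideal `q`, the subgroup generated by the conjugates
`z_{ij}(a, r) = e_{ji}(r) e_{ij}(a) e_{ji}(-r)` with `a ∈ q` contains `e_{ij}(a)` and is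
normalized by every `e_{kl}(m)` when `n ≥ 3`, hence contains `E_n(q)`. Conjugating by
`e_{kl}(m)` with `l ∉ {i, j}` or `k ∉ {i, j}` just multiplies by elementary matrices with entries
in `q`, and `e_{ji}(m)` turns `r` into `m + r`. Conjugating by `e_{ij}(m)` gives a transvection
`1 + u vᵀ` with `u, v` supported on `{i, j}`, which for a third index `h` is the commutator of
`∏ e_{ph}(u_p)` and `∏ e_{hp}(v_p)`.
The same commutator formula writes `z_{ij}(bc, r)` as
`⁅e_{ih}(b) e_{jh}(br), e_{hi}(-cr) e_{hj}(c)⁆`, which lies in `F_n(π)` when `b, c ∈ π`.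
-/

open scoped commutatorElement

namespace Tits

open Matrix.SpecialLinearGroup

section Transvec

variable {ι R : Type*} [DecidableEq ι] [CommRing R]

def transvec (u v : ι → R) : Matrix ι ι R := 1 + vecMulVec u v

lemma single_eq_vecMulVec (i j : ι) (c : R) :
    Matrix.single i j c = vecMulVec (Pi.single i c) (Pi.single j 1) := by
  ext p q
  simp only [single_apply, vecMulVec_apply, Pi.single_apply, mul_ite, mul_one, mul_zero]
  grind

lemma transvec_single_left (k : ι) (c : R) (v : ι → R) :
    transvec (Pi.single k c) v = transvec (Pi.single k 1) (c • v) := by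
  rw [transvec, transvec, vecMulVec_smul, ← smul_vecMulVec, ← Pi.single_smul', smul_eq_mul,
    mul_one]

lemma transvec_single_right (u : ι → R) (l : ι) (d : R) :
    transvec u (Pi.single l d) = transvec (d • u) (Pi.single l 1) := by
  rw [transvec, transvec, smul_vecMulVec, ← vecMulVec_smul, ← Pi.single_smul', smul_eq_mul,
    mul_one]

variable [Fintype ι]

lemma transvec_mul_transvec_of_dotProduct_eq_zero {u v u' v' : ι → R} (h : v ⬝ᵥ u' = 0) :
    transvec u v * transvec u' v' = 1 + vecMulVec u v + vecMulVec u' v' := by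
  simp only [transvec, add_mul, mul_add, one_mul, mul_one, vecMulVec_mul_vecMulVec, h,
    zero_smul, vecMulVec_zero]
  abel

lemma transvec_add_left {u u' v : ι → R} (h : v ⬝ᵥ u' = 0) :
    transvec (u + u') v = transvec u v * transvec u' v := by
  rw [transvec_mul_transvec_of_dotProduct_eq_zero h, transvec, add_vecMulVec, add_assoc]

lemma transvec_add_right {u v v' : ι → R} (h : v ⬝ᵥ u = 0) :
    transvec u (v + v') = transvec u v * transvec u v' := by
  rw [transvec_mul_transvec_of_dotProduct_eq_zero h, transvec, vecMulVec_add, add_assoc]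

lemma transvec_mulVec (u v x : ι → R) : transvec u v *ᵥ x = x + (v ⬝ᵥ x) • u := by
  simp [transvec, add_mulVec, vecMulVec_mulVec]

lemma vecMul_transvec (x u v : ι → R) : x ᵥ* transvec u v = x + (x ⬝ᵥ u) • v := by
  simp [transvec, vecMul_add, vecMul_vecMulVec]

lemma mul_transvec_mul_of_mul_eq_one {g g' : Matrix ι ι R} (h : g * g' = 1) (u v : ι → R) :
    g * transvec u v * g' = transvec (g *ᵥ u) (v ᵥ* g') := by
  rw [transvec, transvec, mul_add, add_mul, mul_one, h, mul_vecMulVec, vecMulVec_mul]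

lemma one_add_mul_one_add_mul_one_sub_mul_one_sub {M : Type*} [Ring M] {X Y : M}
    (hXX : X * X = 0) (hYY : Y * Y = 0) (hYX : Y * X = 0) :
    (1 + X) * (1 + Y) * (1 - X) * (1 - Y) = 1 + X * Y := by
  have h₁ : (1 + Y) * (1 - X) = 1 + Y - X := by
    simp only [add_mul, mul_sub, one_mul, mul_one, hYX]; abel
  have h₂ : (1 + X) * (1 + Y - X) = 1 + Y + X * Y := by
    simp only [mul_add, mul_sub, add_mul, one_mul, mul_one, hXX]; abel
  have h₃ : (1 + Y + X * Y) * (1 - Y) = 1 + X * Y := by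
    simp only [mul_sub, add_mul, one_mul, mul_one, mul_assoc, hYY, mul_zero]; abel
  rw [mul_assoc (1 + X), h₁, h₂, h₃]

lemma coe_inv_of_coe_mul_eq_one {g : SpecialLinearGroup ι R} {M : Matrix ι ι R}
    (h : (g : Matrix ι ι R) * M = 1) : ((g⁻¹ : SpecialLinearGroup ι R) : Matrix ι ι R) = M :=
  calc ((g⁻¹ : SpecialLinearGroup ι R) : Matrix ι ι R)
      = ↑(g⁻¹ : SpecialLinearGroup ι R) * (↑g * M) := by rw [h, mul_one]
    _ = M := by rw [← Matrix.mul_assoc, ← coe_mul, inv_mul_cancel, coe_one, Matrix.one_mul]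

lemma coe_commutatorElement_of_coe_eq_one_add {g g' : SpecialLinearGroup ι R}
    {X Y : Matrix ι ι R} (hg : (g : Matrix ι ι R) = 1 + X) (hg' : (g' : Matrix ι ι R) = 1 + Y)
    (hXX : X * X = 0) (hYY : Y * Y = 0) (hYX : Y * X = 0) :
    ((⁅g, g'⁆ : SpecialLinearGroup ι R) : Matrix ι ι R) = 1 + X * Y := by
  have inv_of_sq_eq_zero : ∀ {k : SpecialLinearGroup ι R} {Z : Matrix ι ι R},
      (k : Matrix ι ι R) = 1 + Z → Z * Z = 0 →
        ((k⁻¹ : SpecialLinearGroup ι R) : Matrix ι ι R) = 1 - Z :=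
    fun hk hZ => coe_inv_of_coe_mul_eq_one (by
      rw [hk, mul_sub, mul_one, add_mul, one_mul, hZ]; abel)
  rw [commutatorElement_def, coe_mul, coe_mul, coe_mul, hg, hg', inv_of_sq_eq_zero hg hXX,
    inv_of_sq_eq_zero hg' hYY, one_add_mul_one_add_mul_one_sub_mul_one_sub hXX hYY hYX]

lemma coe_commutatorElement_eq_transvec {g g' : SpecialLinearGroup ι R} {u v : ι → R} {h : ι}
    (hg : (g : Matrix ι ι R) = transvec u (Pi.single h 1))
    (hg' : (g' : Matrix ι ι R) = transvec (Pi.single h 1) v)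
    (hu : u h = 0) (hv : v h = 0) (hvu : v ⬝ᵥ u = 0) :
    ((⁅g, g'⁆ : SpecialLinearGroup ι R) : Matrix ι ι R) = transvec u v := by
  rw [coe_commutatorElement_of_coe_eq_one_add hg hg'] <;>
    simp [vecMulVec_mul_vecMulVec, single_dotProduct, dotProduct_single, hu, hv, hvu, transvec]

lemma coe_mul_mul_inv_of_coe_eq_transvec (e : SpecialLinearGroup ι R)
    {g : SpecialLinearGroup ι R} {u v : ι → R} (hg : (g : Matrix ι ι R) = transvec u v) :
    ((e * g * e⁻¹ : SpecialLinearGroup ι R) : Matrix ι ι R)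
      = transvec ((e : Matrix ι ι R) *ᵥ u)
          (v ᵥ* ((e⁻¹ : SpecialLinearGroup ι R) : Matrix ι ι R)) := by
  rw [coe_mul, coe_mul, hg,
    mul_transvec_mul_of_mul_eq_one (by rw [← coe_mul, mul_inv_cancel, coe_one])]

end Transvec

variable {A : Type} [CommRing A] {n : ℕ}

lemma coe_elem {i j : Fin n} (hij : i ≠ j) (c : A) :
    (elem A i j hij c : Matrix (Fin n) (Fin n) A) = transvec (Pi.single i c) (Pi.single j 1) :=
  congrArg (1 + ·) (single_eq_vecMulVec i j c)

lemma coe_elem' {i j : Fin n} (hij : i ≠ j) (c : A) :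
    (elem A i j hij c : Matrix (Fin n) (Fin n) A) = transvec (Pi.single i 1) (Pi.single j c) := by
  rw [coe_elem]
  ext p q
  simp [transvec, vecMulVec_apply, Pi.single_apply]

lemma elem_mul_elem (i j : Fin n) (hij : i ≠ j) (a b : A) :
    elem A i j hij a * elem A i j hij b = elem A i j hij (a + b) :=
  Subtype.ext (transvection_mul_transvection_same i j hij a b)

lemma elem_zero (i j : Fin n) (hij : i ≠ j) : elem A i j hij 0 = 1 :=
  Subtype.ext (transvection_zero i j)

lemma elem_inv (i j : Fin n) (hij : i ≠ j) (a : A) :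
    (elem A i j hij a)⁻¹ = elem A i j hij (-a) :=
  inv_eq_of_mul_eq_one_right (by rw [elem_mul_elem, add_neg_cancel, elem_zero])

lemma coe_elem_mul_elem_col {i j h : Fin n} (hih : i ≠ h) (hjh : j ≠ h) (x y : A) :
    ((elem A i h hih x * elem A j h hjh y : SL n A) : Matrix (Fin n) (Fin n) A)
      = transvec (Pi.single i x + Pi.single j y) (Pi.single h 1) := by
  rw [coe_mul, coe_elem, coe_elem, transvec_add_left]
  simp [hjh.symm]

lemma coe_elem_mul_elem_row {i j h : Fin n} (hhi : h ≠ i) (hhj : h ≠ j) (s t : A) :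
    ((elem A h i hhi s * elem A h j hhj t : SL n A) : Matrix (Fin n) (Fin n) A)
      = transvec (Pi.single h 1) (Pi.single i s + Pi.single j t) := by
  rw [coe_mul, coe_elem', coe_elem', transvec_add_right]
  simp [hhi]

lemma elem_mul_elem_comm_of_same_row {i j h : Fin n} (hhi : h ≠ i) (hhj : h ≠ j) (s t : A) :
    elem A h i hhi s * elem A h j hhj t = elem A h j hhj t * elem A h i hhi s :=
  Subtype.ext (by rw [coe_elem_mul_elem_row, coe_elem_mul_elem_row, add_comm])

lemma coe_elem_mulVec {k l : Fin n} (hkl : k ≠ l) (m : A) (u : Fin n → A) :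
    (elem A k l hkl m : Matrix (Fin n) (Fin n) A) *ᵥ u = u + u l • Pi.single k m := by
  rw [coe_elem, transvec_mulVec, single_dotProduct, one_mul]

lemma vecMul_coe_elem_inv {k l : Fin n} (hkl : k ≠ l) (m : A) (v : Fin n → A) :
    v ᵥ* ((elem A k l hkl m)⁻¹ : SL n A) = v + v k • Pi.single l (-m) := by
  rw [elem_inv, coe_elem', vecMul_transvec, dotProduct_single, mul_one]

/-- The Vaserstein–Suslin generator `z_{ij}(a, r)`. -/
def elemConj (i j : Fin n) (hij : i ≠ j) (a r : A) : SL n A :=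
  elem A j i hij.symm r * elem A i j hij a * (elem A j i hij.symm r)⁻¹

lemma coe_elemConj {i j : Fin n} (hij : i ≠ j) (a r : A) :
    (elemConj i j hij a r : Matrix (Fin n) (Fin n) A)
      = transvec (Pi.single i a + Pi.single j (a * r)) (Pi.single i (-r) + Pi.single j 1) := by
  rw [elemConj, coe_mul_mul_inv_of_coe_eq_transvec _ (coe_elem hij a), coe_elem_mulVec,
    vecMul_coe_elem_inv]
  simp [add_comm, ← Pi.single_smul']

lemma dotProduct_elemConj_vectors {i j : Fin n} (hij : i ≠ j) (a r : A) :
    (Pi.single i (-r) + Pi.single j 1 : Fin n → A) ⬝ᵥ (Pi.single i a + Pi.single j (a * r))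
      = 0 := by
  simp [hij, hij.symm]
  ring

lemma elemConj_add {i j : Fin n} (hij : i ≠ j) (a b r : A) :
    elemConj i j hij (a + b) r = elemConj i j hij a r * elemConj i j hij b r := by
  simp only [elemConj, ← elem_mul_elem]
  group

lemma elem_mul_elemConj_mul_inv {i j : Fin n} (hij : i ≠ j) (a r m : A) :
    elem A j i hij.symm m * elemConj i j hij a r * (elem A j i hij.symm m)⁻¹
      = elemConj i j hij a (m + r) := by
  simp only [elemConj, ← elem_mul_elem]
  group

variable (n) in
def elemConjSubgroup (q : Ideal A) : Subgroup (SL n A) :=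
  Subgroup.closure
    {x | ∃ (i j : Fin n) (hij : i ≠ j), ∃ a ∈ q, ∃ r : A, x = elemConj i j hij a r}

variable {q : Ideal A}

lemma elemConj_mem_elemConjSubgroup {i j : Fin n} (hij : i ≠ j) {a : A} (ha : a ∈ q) (r : A) :
    elemConj i j hij a r ∈ elemConjSubgroup n q :=
  Subgroup.subset_closure ⟨i, j, hij, a, ha, r, rfl⟩

lemma elem_mem_Fgrp {i j : Fin n} (hij : i ≠ j) {a : A} (ha : a ∈ q) :
    elem A i j hij a ∈ Fgrp A n q :=
  Subgroup.subset_closure ⟨i, j, hij, a, ha, rfl⟩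

lemma Fgrp_le_elemConjSubgroup : Fgrp A n q ≤ elemConjSubgroup n q := by
  refine (Subgroup.closure_le _).2 ?_
  rintro _ ⟨i, j, hij, a, ha, rfl⟩
  simpa [elemConj, elem_zero] using elemConj_mem_elemConjSubgroup hij ha 0

lemma conj_elemConj_mem_of_right_ne {i j k l : Fin n} (hij : i ≠ j) (hkl : k ≠ l) (hli : l ≠ i)
    (hlj : l ≠ j) {a : A} (ha : a ∈ q) (r m : A) :
    elem A k l hkl m * elemConj i j hij a r * (elem A k l hkl m)⁻¹ ∈ elemConjSubgroup n q := by
  set c := (Pi.single i (-r) + Pi.single j 1 : Fin n → A) k * -m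
  have key : elem A k l hkl m * elemConj i j hij a r * (elem A k l hkl m)⁻¹
      = elemConj i j hij a r
        * (elem A i l hli.symm (c * a) * elem A j l hlj.symm (c * (a * r))) := by
    have hul : (Pi.single i a + Pi.single j (a * r) : Fin n → A) l = 0 := by simp [hli, hlj]
    apply Subtype.ext
    rw [coe_mul_mul_inv_of_coe_eq_transvec _ (coe_elemConj hij a r), coe_elem_mulVec,
      vecMul_coe_elem_inv, hul, zero_smul, add_zero,
      transvec_add_right (dotProduct_elemConj_vectors hij a r), ← Pi.single_smul', smul_eq_mul,
      transvec_single_right, coe_mul, coe_elemConj, coe_elem_mul_elem_col]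
    simp only [smul_add, ← Pi.single_smul', smul_eq_mul]
    rfl
  rw [key]
  exact mul_mem (elemConj_mem_elemConjSubgroup hij ha r) (Fgrp_le_elemConjSubgroup
    (mul_mem (elem_mem_Fgrp _ (q.mul_mem_left c ha))
      (elem_mem_Fgrp _ (q.mul_mem_left c (q.mul_mem_right r ha)))))

lemma conj_elemConj_mem_of_left_ne {i j k l : Fin n} (hij : i ≠ j) (hkl : k ≠ l) (hki : k ≠ i)
    (hkj : k ≠ j) {a : A} (ha : a ∈ q) (r m : A) :
    elem A k l hkl m * elemConj i j hij a r * (elem A k l hkl m)⁻¹ ∈ elemConjSubgroup n q := by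
  set c := (Pi.single i a + Pi.single j (a * r) : Fin n → A) l * m
  have hc : c ∈ q := q.mul_mem_right m <| q.add_mem
    (by rw [Pi.single_apply]; split_ifs <;> simp [ha])
    (by rw [Pi.single_apply]; split_ifs <;> simp [q.mul_mem_right r ha])
  have key : elem A k l hkl m * elemConj i j hij a r * (elem A k l hkl m)⁻¹
      = elemConj i j hij a r * (elem A k i hki (c * -r) * elem A k j hkj (c * 1)) := by
    have hvk : (Pi.single i (-r) + Pi.single j 1 : Fin n → A) k = 0 := by simp [hki, hkj]
    apply Subtype.ext
    rw [coe_mul_mul_inv_of_coe_eq_transvec _ (coe_elemConj hij a r), coe_elem_mulVec,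
      vecMul_coe_elem_inv, hvk, zero_smul, add_zero,
      transvec_add_left (by simp [hki, hkj]), ← Pi.single_smul', smul_eq_mul,
      transvec_single_left, coe_mul, coe_elemConj, coe_elem_mul_elem_row]
    simp only [smul_add, ← Pi.single_smul', smul_eq_mul]
    rfl
  rw [key]
  exact mul_mem (elemConj_mem_elemConjSubgroup hij ha r) (Fgrp_le_elemConjSubgroup
    (mul_mem (elem_mem_Fgrp _ (q.mul_mem_right _ hc))
      (elem_mem_Fgrp _ (q.mul_mem_right _ hc))))

lemma coe_commutatorElement_elem_mul_elem {i j h : Fin n} (hij : i ≠ j) (hih : i ≠ h)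
    (hjh : j ≠ h) {x y s t : A} (hxy : s * x + t * y = 0) :
    ((⁅elem A i h hih x * elem A j h hjh y, elem A h i hih.symm s * elem A h j hjh.symm t⁆ :
        SL n A) : Matrix (Fin n) (Fin n) A)
      = transvec (Pi.single i x + Pi.single j y) (Pi.single i s + Pi.single j t) :=
  coe_commutatorElement_eq_transvec (coe_elem_mul_elem_col hih hjh x y)
    (coe_elem_mul_elem_row hih.symm hjh.symm s t) (by simp [hih.symm, hjh.symm])
    (by simp [hih.symm, hjh.symm]) (by simpa [hij, hij.symm] using hxy)

lemma mem_elemConjSubgroup_of_coe_eq_transvec {i j h : Fin n} (hij : i ≠ j) (hih : i ≠ h)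
    (hjh : j ≠ h) {x y s t : A} (hx : x ∈ q) (hy : y ∈ q) (hxy : s * x + t * y = 0)
    {g : SL n A} (hg : (g : Matrix (Fin n) (Fin n) A)
      = transvec (Pi.single i x + Pi.single j y) (Pi.single i s + Pi.single j t)) :
    g ∈ elemConjSubgroup n q := by
  set X := elem A i h hih x * elem A j h hjh y with hX
  set Y := elem A h i hih.symm s * elem A h j hjh.symm t with hY
  have hX_mem : X ∈ elemConjSubgroup n q :=
    Fgrp_le_elemConjSubgroup (mul_mem (elem_mem_Fgrp _ hx) (elem_mem_Fgrp _ hy))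
  -- Conjugating a factor of `X` by the factor of `Y` in the transposed position yields a
  -- generator `z`; conjugating that by the other factor of `Y` is the case `l ∉ {i, j}`.
  have hYX_mem : Y * X * Y⁻¹ ∈ elemConjSubgroup n q := by
    have hi : Y * elem A i h hih x * Y⁻¹ = elem A h j hjh.symm t * elemConj i h hih x s
        * (elem A h j hjh.symm t)⁻¹ := by
      rw [hY, elem_mul_elem_comm_of_same_row, elemConj]; group
    have hj : Y * elem A j h hjh y * Y⁻¹ = elem A h i hih.symm s * elemConj j h hjh y t
        * (elem A h i hih.symm s)⁻¹ := by
      rw [hY, elemConj]; group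
    have hsplit :
        Y * X * Y⁻¹ = (Y * elem A i h hih x * Y⁻¹) * (Y * elem A j h hjh y * Y⁻¹) := by
      rw [hX]; group
    rw [hsplit, hi, hj]
    exact mul_mem (conj_elemConj_mem_of_right_ne hih _ hij.symm hjh hx s t)
      (conj_elemConj_mem_of_right_ne hjh _ hij hih hy t s)
  have hg_eq : g = ⁅X, Y⁆ :=
    Subtype.ext (hg.trans (coe_commutatorElement_elem_mul_elem hij hih hjh hxy).symm)
  have hcomm : ⁅X, Y⁆ = X * (Y * X * Y⁻¹)⁻¹ := by rw [commutatorElement_def]; group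
  rw [hg_eq, hcomm]
  exact mul_mem hX_mem (inv_mem hYX_mem)

lemma conj_elemConj_mem (hn : 3 ≤ n) {i j k l : Fin n} (hij : i ≠ j) (hkl : k ≠ l) {a : A}
    (ha : a ∈ q) (r m : A) :
    elem A k l hkl m * elemConj i j hij a r * (elem A k l hkl m)⁻¹ ∈ elemConjSubgroup n q := by
  by_cases hl : l ≠ i ∧ l ≠ j
  · exact conj_elemConj_mem_of_right_ne hij hkl hl.1 hl.2 ha r m
  by_cases hk : k ≠ i ∧ k ≠ j
  · exact conj_elemConj_mem_of_left_ne hij hkl hk.1 hk.2 ha r m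
  obtain ⟨rfl, rfl⟩ | ⟨rfl, rfl⟩ : (k = i ∧ l = j) ∨ (k = j ∧ l = i) := by grind
  · obtain ⟨h, hhk, hhl⟩ := Fin.exists_ne_and_ne_of_two_lt k l hn
    refine mem_elemConjSubgroup_of_coe_eq_transvec hij hhk.symm hhl.symm
      (x := a + a * r * m) (y := a * r) (s := -r) (t := 1 + r * m)
      (q.add_mem ha (q.mul_mem_right m (q.mul_mem_right r ha))) (q.mul_mem_right r ha)
      (by ring) ?_
    rw [coe_mul_mul_inv_of_coe_eq_transvec _ (coe_elemConj hij a r), coe_elem_mulVec,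
      vecMul_coe_elem_inv]
    congr 1 <;> ext p <;>
      simp only [Pi.add_apply, Pi.smul_apply, Pi.single_apply, smul_eq_mul] <;> grind
  · rw [elem_mul_elemConj_mul_inv]
    exact elemConj_mem_elemConjSubgroup hij ha _

lemma elem_conj_mem_elemConjSubgroup (hn : 3 ≤ n) {k l : Fin n} (hkl : k ≠ l) (m : A)
    {x : SL n A} (hx : x ∈ elemConjSubgroup n q) :
    elem A k l hkl m * x * (elem A k l hkl m)⁻¹ ∈ elemConjSubgroup n q := by
  have hle : elemConjSubgroup n q
      ≤ (elemConjSubgroup n q).comap (MulAut.conj (elem A k l hkl m)).toMonoidHom := by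
    refine (Subgroup.closure_le _).2 ?_
    rintro _ ⟨i, j, hij, a, ha, r, rfl⟩
    exact conj_elemConj_mem hn hij hkl ha r m
  exact hle hx

lemma conj_mem_elemConjSubgroup_of_mem_EgrpAbs (hn : 3 ≤ n) {g x : SL n A}
    (hg : g ∈ EgrpAbs A n) (hx : x ∈ elemConjSubgroup n q) :
    g * x * g⁻¹ ∈ elemConjSubgroup n q := by
  induction hg using Subgroup.closure_induction'' generalizing x with
  | mem _ he =>
    obtain ⟨k, l, hkl, m, rfl⟩ := he
    exact elem_conj_mem_elemConjSubgroup hn hkl m hx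
  | inv_mem _ he =>
    obtain ⟨k, l, hkl, m, rfl⟩ := he
    rw [elem_inv]
    exact elem_conj_mem_elemConjSubgroup hn hkl (-m) hx
  | one => simpa using hx
  | mul g₁ g₂ _ _ ih₁ ih₂ => simpa only [_root_.mul_inv_rev, mul_assoc] using ih₁ (ih₂ hx)

lemma Egrp_le_elemConjSubgroup (hn : 3 ≤ n) (q : Ideal A) :
    Egrp A n q ≤ elemConjSubgroup n q := by
  refine (Subgroup.closure_le _).2 ?_
  rintro _ ⟨g, hg, i, j, hij, a, ha, rfl⟩
  exact conj_mem_elemConjSubgroup_of_mem_EgrpAbs hn hg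
    (Fgrp_le_elemConjSubgroup (elem_mem_Fgrp hij ha))

lemma elemConj_mul_mem_Fgrp {π : Ideal A} {i j h : Fin n} (hij : i ≠ j) (hih : i ≠ h)
    (hjh : j ≠ h) {b c : A} (hb : b ∈ π) (hc : c ∈ π) (r : A) :
    elemConj i j hij (b * c) r ∈ Fgrp A n π := by
  have hX : elem A i h hih b * elem A j h hjh (b * r) ∈ Fgrp A n π :=
    mul_mem (elem_mem_Fgrp _ hb) (elem_mem_Fgrp _ (π.mul_mem_right r hb))
  have hY : elem A h i hih.symm (c * -r) * elem A h j hjh.symm c ∈ Fgrp A n π :=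
    mul_mem (elem_mem_Fgrp _ (π.mul_mem_right _ hc)) (elem_mem_Fgrp _ hc)
  have hcomm : elemConj i j hij (b * c) r = ⁅elem A i h hih b * elem A j h hjh (b * r),
      elem A h i hih.symm (c * -r) * elem A h j hjh.symm c⁆ := by
    apply Subtype.ext
    rw [coe_commutatorElement_elem_mul_elem hij hih hjh (by ring), coe_elemConj, transvec,
      transvec]
    congr 1
    ext p p'
    simp only [vecMulVec_apply, Pi.add_apply, Pi.single_apply]
    split_ifs <;> ring
  rw [hcomm, commutatorElement_def]
  exact mul_mem (mul_mem (mul_mem hX hY) (inv_mem hX)) (inv_mem hY)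

lemma elemConjSubgroup_sq_le_Fgrp (hn : 3 ≤ n) (π : Ideal A) :
    elemConjSubgroup n (π ^ 2) ≤ Fgrp A n π := by
  refine (Subgroup.closure_le _).2 ?_
  rintro _ ⟨i, j, hij, a, ha, r, rfl⟩
  obtain ⟨h, hhi, hhj⟩ := Fin.exists_ne_and_ne_of_two_lt i j hn
  rw [pow_two] at ha
  refine Submodule.mul_induction_on ha
    (fun b hb c hc => elemConj_mul_mem_Fgrp hij hhi.symm hhj.symm hb hc r) fun a b ha hb => ?_
  rw [elemConj_add]
  exact mul_mem ha hb

end Tits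

/-- **Tits' theorem.** For a commutative unital ring `A`, an ideal `π` of `A` and `n ≥ 3`,
the normal elementary subgroup `E_n(π²)` is contained in the true elementary subgroup
`F_n(π)`. -/
theorem tits_theorem (A : Type) [CommRing A] (π : Ideal A) (n : ℕ) (hn : 3 ≤ n) :
    Egrp A n (π ^ 2) ≤ Fgrp A n π :=
  (Tits.Egrp_le_elemConjSubgroup hn (π ^ 2)).trans (Tits.elemConjSubgroup_sq_le_Fgrp hn π)
end

section
/- Let A be a commutative unital ring and let x, y, z₁, z₂ ∈ A. Then in SL_3(A) the following commutator identity holds: the block-diagonal matrix diag(S(x,y;z₁z₂), 1), i.e. [[1+xyz₁z₂, −x²z₁z₂, 0],[y²z₁z₂, 1−xyz₁z₂, 0],[0,0,1]], equals the commutator [g, h] = g⁻¹h⁻¹gh where g = [[1,0,xz₁],[0,1,yz₁],[0,0,1]] and h = [[1,0,0],[0,1,0],[yz₂,−xz₂,1]]. -/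
/-!
Write `e = (0,0,1)`, `u = z₁(x,y,0)` and `w = z₂(y,-x,0)`. Then `g = 1 + u eᵀ`, `h = 1 + e wᵀ` and
`diag(S(x,y;z₁z₂), 1) = 1 + u wᵀ` are rank-one perturbations of the identity. Since `e·e = 1`
while `e·u = w·u = 0`, multiplying these out gives `h g (1 + u wᵀ) = 1 + u eᵀ + e wᵀ + u wᵀ = g h`,
i.e. `1 + u wᵀ = g⁻¹h⁻¹gh`.
-/

open Matrix

/-- The matrix `diag(S(x,y;z₁z₂), 1) ∈ SL_3(A)`. -/
def suspSymbol3 (A : Type) [CommRing A] (x y z₁ z₂ : A) : SL 3 A :=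
  ⟨!![1 + x * y * (z₁ * z₂), -(x ^ 2 * (z₁ * z₂)), 0;
      y ^ 2 * (z₁ * z₂), 1 - x * y * (z₁ * z₂), 0;
      0, 0, 1], by simp [Matrix.det_fin_three, Matrix.vecHead, Matrix.vecTail]; ring⟩

/-- The matrix `g = [[1,0,xz₁],[0,1,yz₁],[0,0,1]] ∈ SL_3(A)`. -/
def upperG (A : Type) [CommRing A] (x y z₁ : A) : SL 3 A :=
  ⟨!![1, 0, x * z₁; 0, 1, y * z₁; 0, 0, 1], by
    simp [Matrix.det_fin_three, Matrix.vecHead, Matrix.vecTail]⟩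

/-- The matrix `h = [[1,0,0],[0,1,0],[yz₂,−xz₂,1]] ∈ SL_3(A)`. -/
def lowerH (A : Type) [CommRing A] (x y z₂ : A) : SL 3 A :=
  ⟨!![1, 0, 0; 0, 1, 0; y * z₂, -(x * z₂), 1], by
    simp [Matrix.det_fin_three, Matrix.vecHead, Matrix.vecTail]⟩

namespace Matrix

variable {n R : Type*} [Fintype n] [DecidableEq n] [CommRing R]

theorem commutator_one_add_vecMulVec {u p f w : n → R} (hfp : f ⬝ᵥ p = 1) (hfu : f ⬝ᵥ u = 0)
    (hwu : w ⬝ᵥ u = 0) :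
    (1 + vecMulVec p w) * (1 + vecMulVec u f) * (1 + vecMulVec u w) =
      (1 + vecMulVec u f) * (1 + vecMulVec p w) := by
  simp only [mul_add, add_mul, mul_one, one_mul, vecMulVec_mul_vecMulVec, hfp, hfu, hwu,
    zero_smul, one_smul, vecMulVec_zero, add_zero]
  abel

end Matrix

section

variable (A : Type) [CommRing A] (x y z₁ z₂ : A)

theorem coe_upperG :
    (upperG A x y z₁ : Matrix (Fin 3) (Fin 3) A) =
      1 + vecMulVec ![x * z₁, y * z₁, 0] ![0, 0, 1] := by
  ext i j
  fin_cases i <;> fin_cases j <;> simp [upperG]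

theorem coe_lowerH :
    (lowerH A x y z₂ : Matrix (Fin 3) (Fin 3) A) =
      1 + vecMulVec ![0, 0, 1] ![y * z₂, -(x * z₂), 0] := by
  ext i j
  fin_cases i <;> fin_cases j <;> simp [lowerH]

theorem coe_suspSymbol3 :
    (suspSymbol3 A x y z₁ z₂ : Matrix (Fin 3) (Fin 3) A) =
      1 + vecMulVec ![x * z₁, y * z₁, 0] ![y * z₂, -(x * z₂), 0] := by
  ext i j
  fin_cases i <;> fin_cases j <;> simp [suspSymbol3] <;> ring

end

/-- In `SL_3(A)`, the matrix `diag(S(x,y;z₁z₂), 1)` equals the commutator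
`[g,h] = g⁻¹h⁻¹gh` of `g = [[1,0,xz₁],[0,1,yz₁],[0,0,1]]` and
`h = [[1,0,0],[0,1,0],[yz₂,−xz₂,1]]`. -/
theorem commutator_identity (A : Type) [CommRing A] (x y z₁ z₂ : A) :
    suspSymbol3 A x y z₁ z₂ =
      (upperG A x y z₁)⁻¹ * (lowerH A x y z₂)⁻¹ * upperG A x y z₁ * lowerH A x y z₂ := by
  have key : lowerH A x y z₂ * upperG A x y z₁ * suspSymbol3 A x y z₁ z₂ =
      upperG A x y z₁ * lowerH A x y z₂ := by
    ext i j
    simp only [Matrix.SpecialLinearGroup.coe_mul, coe_upperG, coe_lowerH, coe_suspSymbol3]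
    rw [commutator_one_add_vecMulVec (by simp) (by simp)
      (by simp [dotProduct, Fin.sum_univ_three]; ring)]
  rw [eq_inv_mul_of_mul_eq key]
  group
end

section
/- Let A be a commutative unital ring, let π be an ideal of A, and let n ≥ 3. For every a ∈ π² (the product ideal) and all indices i ≠ j, the elementary matrix e_{ij}(a) lies in the commutator subgroup [F_n(π), F_n(π)]. -/
/-!
Since `π²` is additively generated by products `xy` with `x, y ∈ π` and `a ↦ e_{ij}(a)` is a
homomorphism, it suffices to treat `a = xy`. As `n ≥ 3` there is an index `k ∉ {i, j}`, and then
the Steinberg relation `e_{ij}(xy) = [e_{ik}(x), e_{kj}(y)]` exhibits `e_{ij}(xy)` as a commutator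
of two generators of `F_n(π)`.
-/

open Matrix
open scoped commutatorElement

section Elementary

variable {A : Type} [CommRing A] {n : ℕ}

lemma elem_add (i j : Fin n) (hij : i ≠ j) (a b : A) :
    elem A i j hij (a + b) = elem A i j hij a * elem A i j hij b :=
  Subtype.ext (Matrix.transvection_mul_transvection_same i j hij a b).symm

lemma elem_zero (i j : Fin n) (hij : i ≠ j) : elem A i j hij 0 = 1 :=
  Subtype.ext (Matrix.transvection_zero i j)

lemma elem_neg (i j : Fin n) (hij : i ≠ j) (a : A) :
    elem A i j hij (-a) = (elem A i j hij a)⁻¹ :=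
  eq_inv_of_mul_eq_one_left (by rw [← elem_add, neg_add_cancel, elem_zero])

lemma commutatorElement_elem_elem {i j k : Fin n} (hik : i ≠ k) (hkj : k ≠ j) (hij : i ≠ j)
    (x y : A) : ⁅elem A i k hik x, elem A k j hkj y⁆ = elem A i j hij (x * y) := by
  rw [commutatorElement_def, ← elem_neg, ← elem_neg]
  apply Subtype.ext
  change transvection i k x * transvection k j y * transvection i k (-x) *
      transvection k j (-y) = transvection i j (x * y)
  simp only [transvection, add_mul, mul_add, one_mul, mul_one, single_mul_single_same,
    single_mul_single_of_ne _ _ _ _ hik.symm, single_mul_single_of_ne _ _ _ _ hij.symm,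
    single_mul_single_of_ne _ _ _ _ hkj.symm, mul_neg, neg_mul, add_zero, ← single_neg]
  abel

lemma elem_mem_Fgrp {π : Ideal A} (i j : Fin n) (hij : i ≠ j) {a : A} (ha : a ∈ π) :
    elem A i j hij a ∈ Fgrp A n π :=
  Subgroup.subset_closure ⟨i, j, hij, a, ha, rfl⟩

end Elementary

/-- For `n ≥ 3`, `a ∈ π²` and `i ≠ j`, the elementary matrix `e_{ij}(a)` lies in the
commutator subgroup `[F_n(π), F_n(π)]`. -/
theorem elementary_mem_commutator (A : Type) [CommRing A] (π : Ideal A) (n : ℕ)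
    (hn : 3 ≤ n) (a : A) (ha : a ∈ π ^ 2) (i j : Fin n) (hij : i ≠ j) :
    elem A i j hij a ∈ ⁅Fgrp A n π, Fgrp A n π⁆ := by
  obtain ⟨k, hki, hkj⟩ := Fin.exists_ne_and_ne_of_two_lt i j hn
  rw [sq] at ha
  refine Submodule.mul_induction_on ha (fun x hx y hy => ?_) (fun x y hx hy => ?_)
  · rw [← commutatorElement_elem_elem hki.symm hkj hij]
    exact Subgroup.commutator_mem_commutator (elem_mem_Fgrp _ _ _ hx) (elem_mem_Fgrp _ _ _ hy)
  · rw [elem_add]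
    exact mul_mem hx hy
end

section
/- Let A be a commutative unital ring, let n ≥ 2, let g ∈ SL_n(A), let a ∈ A, and fix indices i ≠ j. Let v denote the i-th column of g⁻¹ and set c_{kl} = g_{jk}·g_{il} − g_{jl}·g_{ik} for k < l. Then g⁻¹·e_{ij}(a)·g = ∏_{k<l} (1_n + a·c_{kl} · v·(v_l·e_k − v_k·e_l)), where e_k denotes the k-th basic row vector and v·(v_l·e_k − v_k·e_l) is the n×n matrix obtained as the product of the column vector v with the row vector v_l·e_k − v_k·e_l (the factors in the product pairwise commute, so the product is independent of the ordering of the pairs (k,l)). -/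
open Matrix

/-- The factor indexed by the pair `p = (k,l)` in the Suslin factorization:
`1_n + a·c_{kl} · v·(v_l·e_k − v_k·e_l)`, where `v` is the `i`-th column of `g⁻¹`,
`c_{kl} = g_{jk}·g_{il} − g_{jl}·g_{ik}`, and `v·(v_l·e_k − v_k·e_l)` is the product of the
column vector `v` with the row vector `v_l·e_k − v_k·e_l`. -/
def suslinFactor (A : Type) [CommRing A] {n : ℕ} (g : SL n A) (a : A) (i j : Fin n)
    (p : Fin n × Fin n) : Matrix (Fin n) (Fin n) A :=
  1 + (a * ((g : Matrix (Fin n) (Fin n) A) j p.1 * (g : Matrix (Fin n) (Fin n) A) i p.2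
          - (g : Matrix (Fin n) (Fin n) A) j p.2 * (g : Matrix (Fin n) (Fin n) A) i p.1)) •
    Matrix.vecMulVec (fun s => ((g⁻¹ : SL n A) : Matrix (Fin n) (Fin n) A) s i)
      (fun s => (if s = p.1 then ((g⁻¹ : SL n A) : Matrix (Fin n) (Fin n) A) p.2 i else 0)
              - (if s = p.2 then ((g⁻¹ : SL n A) : Matrix (Fin n) (Fin n) A) p.1 i else 0))

/-! Let `v` be the `i`-th column of `g⁻¹` and `w` the `j`-th row of `g`, so that
`g⁻¹ e_{ij}(a) g = 1 + a · v w`. The coefficients `c_{kl}` form the alternating matrix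
`c = X - Xᵀ` with `X = (g_j)ᵀ g_i`, and `c v = (g_i · v) g_j - (g_j · v) g_i = g_j = w` since
`g g⁻¹ = 1`; grouping `c v` over the pairs `k < l` gives `w = ∑_{k<l} c_{kl} (v_l e_k - v_k e_l)`.
Every row `v_l e_k - v_k e_l` is orthogonal to `v`, so the rank-one parts `v (v_l e_k - v_k e_l)`
of the factors multiply to zero: the factors commute and their product is `1 +` the sum of these
parts, which is `1 + a · v w`. -/

theorem commute_one_add_of_mul_eq_zero {R : Type*} [Ring R] {x y : R} (hxy : x * y = 0)
    (hyx : y * x = 0) : Commute (1 + x) (1 + y) := by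
  simp only [Commute, SemiconjBy, add_mul, mul_add, one_mul, mul_one, hxy, hyx]
  abel

theorem Finset.noncommProd_eq_one_add_sum {R ι : Type*} [Ring R] {s : Finset ι} {f N : ι → R}
    (hf : ∀ x ∈ s, f x = 1 + N x) (hN : (s : Set ι).Pairwise fun x y => N x * N y = 0)
    (hc : (s : Set ι).Pairwise (Function.onFun Commute f)) :
    s.noncommProd f hc = 1 + ∑ x ∈ s, N x := by
  classical
  induction s using Finset.induction_on with
  | empty => simp
  | insert b s hb ih =>
    have hNb : N b * ∑ x ∈ s, N x = 0 :=
      mul_sum s N (N b) ▸ sum_eq_zero fun x hx =>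
        hN (mem_insert_self b s) (mem_insert_of_mem hx) (ne_of_mem_of_not_mem hx hb).symm
    rw [noncommProd_insert_of_notMem _ _ _ _ hb, sum_insert hb, hf b (mem_insert_self b s),
      ih (fun x hx => hf x (mem_insert_of_mem hx)) (hN.mono (by simp)), add_mul, one_mul,
      mul_add, mul_one, hNb, add_zero, add_assoc, add_comm (N b)]

theorem Finset.sum_filter_lt_add_swap {ι M : Type*} [Fintype ι] [LinearOrder ι]
    [AddCommMonoid M] (f : ι × ι → M) (hf : ∀ k, f (k, k) = 0) :
    ∑ p : ι × ι with p.1 < p.2, (f p + f p.swap) = ∑ p, f p := by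
  have hswap : ∑ p : ι × ι with p.1 < p.2, f p.swap = ∑ p : ι × ι with p.2 < p.1, f p :=
    sum_nbij' Prod.swap Prod.swap (by simp) (by simp) (by simp) (by simp) (by simp)
  have hdiag : ∑ p : ι × ι with p.2 < p.1, f p = ∑ p : ι × ι with ¬p.1 < p.2, f p :=
    sum_subset (by intro p; simp only [mem_filter]; grind) fun p hp hp' => by
      simp only [mem_filter, mem_univ, true_and, not_lt] at hp hp'
      rw [show p = (p.1, p.1) from Prod.ext rfl (le_antisymm hp' hp).symm, hf]
  rw [sum_add_distrib, hswap, hdiag, sum_filter_add_sum_filter_not]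

theorem Matrix.sum_filter_lt_smul_single_sub_single {ι A : Type*} [Fintype ι] [LinearOrder ι]
    [Ring A] (X : Matrix ι ι A) (v : ι → A) :
    ∑ p : ι × ι with p.1 < p.2, (X - Xᵀ) p.1 p.2 • (Pi.single p.1 (v p.2) - Pi.single p.2 (v p.1)) =
      (X - Xᵀ) *ᵥ v := by
  have hfull : (X - Xᵀ) *ᵥ v = ∑ p : ι × ι, (X - Xᵀ) p.1 p.2 • Pi.single p.1 (v p.2) := by
    ext t
    simp [Fintype.sum_prod_type, mulVec, dotProduct, Finset.sum_apply, Pi.single_apply]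
  rw [hfull, ← Finset.sum_filter_lt_add_swap _ (by simp)]
  refine Finset.sum_congr rfl fun p _ => ?_
  have hanti : (X - Xᵀ) p.2 p.1 = -(X - Xᵀ) p.1 p.2 := by simp
  rw [Prod.fst_swap, Prod.snd_swap, hanti, neg_smul, smul_sub, sub_eq_add_neg]

theorem Matrix.sub_transpose_vecMulVec_mulVec {n A : Type*} [Fintype n] [CommRing A]
    (x y v : n → A) :
    (vecMulVec x y - (vecMulVec x y)ᵀ) *ᵥ v = (y ⬝ᵥ v) • x - (x ⬝ᵥ v) • y := by
  simp [sub_mulVec, vecMulVec_mulVec]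

theorem Matrix.sub_transpose_vecMulVec_row_mulVec_col {n A : Type*} [Fintype n] [DecidableEq n]
    [CommRing A] {G H : Matrix n n A} (hGH : G * H = 1) {i j : n} (hij : i ≠ j) :
    (vecMulVec (G.row j) (G.row i) - (vecMulVec (G.row j) (G.row i))ᵀ) *ᵥ H.col i = G.row j := by
  have hrow : ∀ k, G.row k ⬝ᵥ H.col i = (1 : Matrix n n A) k i := fun k => congr_fun₂ hGH k i
  rw [sub_transpose_vecMulVec_mulVec, hrow, hrow, one_apply_eq, one_apply_ne hij.symm, one_smul,
    zero_smul, sub_zero]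

theorem Matrix.single_sub_single_dotProduct_self {n A : Type*} [Fintype n] [DecidableEq n]
    [CommRing A] (v : n → A) (k l : n) :
    (Pi.single k (v l) - Pi.single l (v k)) ⬝ᵥ v = 0 := by
  simp [sub_dotProduct, mul_comm]

theorem Matrix.vecMulVec_sum {n ι A : Type*} [NonUnitalNonAssocSemiring A] (u : n → A)
    (s : Finset ι) (w : ι → n → A) : vecMulVec u (∑ x ∈ s, w x) = ∑ x ∈ s, vecMulVec u (w x) := by
  ext
  simp [vecMulVec_apply, Matrix.sum_apply, Finset.mul_sum]

theorem Matrix.mul_transvection_mul {n A : Type*} [Fintype n] [DecidableEq n] [CommRing A]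
    {P Q : Matrix n n A} (hPQ : P * Q = 1) (i j : n) (a : A) :
    P * transvection i j a * Q = 1 + vecMulVec (P.col i) (a • Q.row j) := by
  rw [transvection, mul_add, add_mul, mul_one, hPQ]
  congr 1
  ext s t
  simp [mul_apply, single, vecMulVec_apply, ite_and, mul_assoc]

theorem suslin_factorization_general (A : Type) [CommRing A] (n : ℕ) (g : SL n A)
    (a : A) (i j : Fin n) (hij : i ≠ j) :
    ∃ hc : ((Finset.univ.filter fun p : Fin n × Fin n => p.1 < p.2 : Finset (Fin n × Fin n)) :
        Set (Fin n × Fin n)).Pairwise (Function.onFun Commute (suslinFactor A g a i j)),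
      ((g⁻¹ * elem A i j hij a * g : SL n A) : Matrix (Fin n) (Fin n) A) =
        (Finset.univ.filter fun p : Fin n × Fin n => p.1 < p.2).noncommProd
          (suslinFactor A g a i j) hc := by
  set G : Matrix (Fin n) (Fin n) A := ↑g
  set v := (↑g⁻¹ : Matrix (Fin n) (Fin n) A).col i
  set X := vecMulVec (G.row j) (G.row i)
  set N : Fin n × Fin n → Matrix (Fin n) (Fin n) A := fun p =>
    (a * (X - Xᵀ) p.1 p.2) • vecMulVec v (Pi.single p.1 (v p.2) - Pi.single p.2 (v p.1))
  have hfactor : ∀ p, suslinFactor A g a i j p = 1 + N p := fun p => by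
    rw [suslinFactor]
    congr
    ext s
    simp [v, Pi.single_apply]
  have hN : ∀ p q, N p * N q = 0 := fun p q => by
    rw [smul_mul_smul_comm, vecMulVec_mul_vecMulVec, single_sub_single_dotProduct_self,
      zero_smul, vecMulVec_zero, smul_zero]
  have hsum : ∑ p : Fin n × Fin n with p.1 < p.2, N p = vecMulVec v (a • G.row j) := by
    have hGv : G * (↑g⁻¹ : Matrix (Fin n) (Fin n) A) = 1 :=
      congr_arg Subtype.val (mul_inv_cancel g)
    simp only [N, X, v, ← vecMulVec_smul, ← vecMulVec_sum, mul_smul, ← Finset.smul_sum,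
      sum_filter_lt_smul_single_sub_single, sub_transpose_vecMulVec_row_mulVec_col hGv hij]
  refine ⟨fun p _ q _ _ => ?_, ?_⟩
  · simpa only [Function.onFun, hfactor] using commute_one_add_of_mul_eq_zero (hN p q) (hN q p)
  calc ((g⁻¹ * elem A i j hij a * g : SL n A) : Matrix (Fin n) (Fin n) A)
      = ↑g⁻¹ * transvection i j a * G := rfl
    _ = 1 + ∑ p : Fin n × Fin n with p.1 < p.2, N p := by
      rw [hsum]
      exact mul_transvection_mul (congr_arg Subtype.val (inv_mul_cancel g)) i j a
    _ = _ := (Finset.noncommProd_eq_one_add_sum (fun p _ => hfactor p)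
      (fun p _ q _ _ => hN p q) _).symm

/-- **The Suslin factorization.** For `n ≥ 2`, `g ∈ SL_n(A)`, `a ∈ A` and `i ≠ j`,
`g⁻¹·e_{ij}(a)·g = ∏_{k<l} (1_n + a·c_{kl}·v·(v_l·e_k − v_k·e_l))`, where `v` is the `i`-th
column of `g⁻¹` and `c_{kl} = g_{jk}·g_{il} − g_{jl}·g_{ik}`; the factors pairwise commute,
so the product (here a `Finset.noncommProd` over the pairs `(k,l)` with `k < l`) does not
depend on the ordering of the pairs. -/
theorem suslin_factorization (A : Type) [CommRing A] (n : ℕ) (hn : 2 ≤ n) (g : SL n A)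
    (a : A) (i j : Fin n) (hij : i ≠ j) :
    ∃ hc : ((Finset.univ.filter fun p : Fin n × Fin n => p.1 < p.2 : Finset (Fin n × Fin n)) :
        Set (Fin n × Fin n)).Pairwise (Function.onFun Commute (suslinFactor A g a i j)),
      ((g⁻¹ * elem A i j hij a * g : SL n A) : Matrix (Fin n) (Fin n) A) =
        (Finset.univ.filter fun p : Fin n × Fin n => p.1 < p.2).noncommProd
          (suslinFactor A g a i j) hc :=
  suslin_factorization_general A n g a i j hij
end

section
/- Let A be a commutative unital ring, let n ≥ 2, let g ∈ SL_n(A), and fix indices i ≠ j. Let v denote the i-th column of g⁻¹, let w denote the j-th row of g, and set c_{kl} = g_{jk}·g_{il} − g_{jl}·g_{ik} for k < l. Then w = ∑_{k<l} c_{kl}·(v_l·e_k − v_k·e_l), where e_k denotes the k-th basic row vector. -/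
/-! The coefficients `c_{kl}` are antisymmetric in `(k, l)`, so the sum over `k < l` of
`c_{kl} (v_l e_k - v_k e_l)` is the full sum `∑_{k,l} c_{kl} v_l e_k`. Its `s`-th coordinate is
`g_{js} (g_i ⬝ v) - g_{is} (g_j ⬝ v)`, and `g g⁻¹ = 1` gives `g_i ⬝ v = 1` and `g_j ⬝ v = 0`. -/

open Matrix

namespace Finset

theorem sum_filter_lt_add_swap_s11 {ι M : Type*} [Fintype ι] [LinearOrder ι] [AddCommMonoid M]
    (f : ι × ι → M) (hf : ∀ a, f (a, a) = 0) :
    ∑ p ∈ univ.filter (fun p : ι × ι => p.1 < p.2), (f p + f p.swap) = ∑ p, f p := by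
  have hswap : ∑ p ∈ univ.filter (fun p : ι × ι => p.1 < p.2), f p.swap
      = ∑ p ∈ univ.filter (fun p : ι × ι => p.2 < p.1), f p :=
    sum_nbij' Prod.swap Prod.swap (by simp) (by simp) (by simp) (by simp) (by simp)
  have hdiag : ∑ p ∈ univ.filter (fun p : ι × ι => p.2 < p.1), f p
      = ∑ p ∈ univ.filter (fun p : ι × ι => ¬ p.1 < p.2), f p := by
    refine sum_subset (fun p => by simpa using le_of_lt) fun ⟨a, b⟩ hab hba => ?_
    simp only [mem_filter, mem_univ, true_and, not_lt] at hab hba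
    rw [le_antisymm hab hba, hf]
  rw [sum_add_distrib, hswap, hdiag, sum_filter_add_sum_filter_not]

end Finset

open Finset

theorem sum_mul_sub_mul_mul_eq_sub_dotProduct {ι R : Type*} [Fintype ι] [CommRing R]
    (a b v : ι → R) (s : ι) :
    ∑ l, (a s * b l - a l * b s) * v l = a s * (b ⬝ᵥ v) - b s * (a ⬝ᵥ v) := by
  simp only [dotProduct, mul_sum, ← sum_sub_distrib]
  exact sum_congr rfl fun l _ => by ring

theorem row_decomposition_general (A : Type) [CommRing A] (n : ℕ) (g : SL n A)
    (i j : Fin n) (hij : i ≠ j) :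
    (fun q => (g : Matrix (Fin n) (Fin n) A) j q) =
      ∑ p ∈ Finset.univ.filter fun p : Fin n × Fin n => p.1 < p.2,
        ((g : Matrix (Fin n) (Fin n) A) j p.1 * (g : Matrix (Fin n) (Fin n) A) i p.2
          - (g : Matrix (Fin n) (Fin n) A) j p.2 * (g : Matrix (Fin n) (Fin n) A) i p.1) •
        fun s => (if s = p.1 then ((g⁻¹ : SL n A) : Matrix (Fin n) (Fin n) A) p.2 i else 0)
               - (if s = p.2 then ((g⁻¹ : SL n A) : Matrix (Fin n) (Fin n) A) p.1 i else 0) := by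
  set G : Matrix (Fin n) (Fin n) A := (g : Matrix (Fin n) (Fin n) A)
  set v : Fin n → A := fun l => ((g⁻¹ : SL n A) : Matrix (Fin n) (Fin n) A) l i
  have hGG : G * ((g⁻¹ : SL n A) : Matrix (Fin n) (Fin n) A) = 1 :=
    congrArg Subtype.val (mul_inv_cancel g)
  have hi : G i ⬝ᵥ v = 1 := by
    simpa only [mul_apply', one_apply_eq] using congrFun₂ hGG i i
  have hj : G j ⬝ᵥ v = 0 := by
    simpa only [mul_apply', one_apply_ne hij.symm] using congrFun₂ hGG j i
  funext s
  set c : Fin n × Fin n → A := fun p => G j p.1 * G i p.2 - G j p.2 * G i p.1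
  let F : Fin n × Fin n → A := fun p => if s = p.1 then c p * v p.2 else 0
  calc G j s = ∑ l, (G j s * G i l - G j l * G i s) * v l := by
          rw [sum_mul_sub_mul_mul_eq_sub_dotProduct, hi, hj]; ring
    _ = ∑ p, F p := by
          rw [Fintype.sum_prod_type, sum_eq_single (f := fun k => ∑ l, F (k, l)) s]
          · simp [F, c]
          · exact fun k _ hk => sum_eq_zero fun l _ => if_neg (Ne.symm hk)
          · simp
    _ = _ := by
          rw [← sum_filter_lt_add_swap_s11 F (by simp [F, c]), Finset.sum_apply]
          refine sum_congr rfl fun p _ => ?_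
          simp only [F, c, Pi.smul_apply, smul_eq_mul, Prod.fst_swap, Prod.snd_swap]
          split_ifs <;> ring

/-- For `n ≥ 2`, `g ∈ SL_n(A)` and `i ≠ j`: the `j`-th row `w` of `g` satisfies
`w = ∑_{k<l} c_{kl}·(v_l·e_k − v_k·e_l)`, where `v` is the `i`-th column of `g⁻¹`,
`c_{kl} = g_{jk}·g_{il} − g_{jl}·g_{ik}` and `e_k` is the `k`-th basic row vector. -/
theorem row_decomposition (A : Type) [CommRing A] (n : ℕ) (hn : 2 ≤ n) (g : SL n A)
    (i j : Fin n) (hij : i ≠ j) :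
    (fun q => (g : Matrix (Fin n) (Fin n) A) j q) =
      ∑ p ∈ Finset.univ.filter fun p : Fin n × Fin n => p.1 < p.2,
        ((g : Matrix (Fin n) (Fin n) A) j p.1 * (g : Matrix (Fin n) (Fin n) A) i p.2
          - (g : Matrix (Fin n) (Fin n) A) j p.2 * (g : Matrix (Fin n) (Fin n) A) i p.1) •
        fun s => (if s = p.1 then ((g⁻¹ : SL n A) : Matrix (Fin n) (Fin n) A) p.2 i else 0)
               - (if s = p.2 then ((g⁻¹ : SL n A) : Matrix (Fin n) (Fin n) A) p.1 i else 0) :=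
  row_decomposition_general A n g i j hij
end

section
/- Let A be a commutative unital ring, let π be an ideal of A, and let n ≥ 2. Then the secondary congruence subgroup Δ_n(π) is a normal subgroup of Ω_n(π). -/
open Matrix

/-- The secondary congruence subgroup
`Δ_n(π) = {g ∈ SL_n(A) : g ≡ 1_n mod π, g_{ii} ≡ 1 mod π²}`, as a set. -/
def Δset (A : Type) [CommRing A] (n : ℕ) (π : Ideal A) : Set (SL n A) :=
  {g | (∀ p q : Fin n, (g : Matrix (Fin n) (Fin n) A) p q
          - (1 : Matrix (Fin n) (Fin n) A) p q ∈ π) ∧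
       (∀ p : Fin n, (g : Matrix (Fin n) (Fin n) A) p p - 1 ∈ π ^ 2)}

/-!
`Ω(π)` is the preimage of the diagonal matrices under reduction mod `π`; it is closed under
inverses because the inverse in `SL` is the adjugate, and the adjugate of a diagonal matrix is
diagonal. `Δ(π)` consists of the `g` with `g - 1` in the additive group `S` of matrices with
entries in `π` and diagonal entries in `π²`. Since `π · π ⊆ π²`, `S` is stable under
multiplication on either side by matrices that are diagonal mod `π`, and everything follows
from `gh - 1 = (g - 1)h + (h - 1)`, `g⁻¹ - 1 = -(g - 1)g⁻¹` and `gxg⁻¹ - 1 = g(x - 1)g⁻¹`.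
-/

namespace Matrix

variable {ι A : Type*} [CommRing A]

/-- The matrices `g - 1` for `g` in the secondary congruence subgroup of level `π`. -/
def secondaryAddSubgroup (π : Ideal A) : AddSubgroup (Matrix ι ι A) where
  carrier := {N | (∀ i j, N i j ∈ π) ∧ ∀ i, N i i ∈ π ^ 2}
  add_mem' ha hb := ⟨fun i j => add_mem (ha.1 i j) (hb.1 i j), fun i => add_mem (ha.2 i) (hb.2 i)⟩
  zero_mem' := ⟨fun _ _ => zero_mem _, fun _ => zero_mem _⟩
  neg_mem' ha := ⟨fun i j => neg_mem (ha.1 i j), fun i => neg_mem (ha.2 i)⟩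

theorem mem_secondaryAddSubgroup {π : Ideal A} {N : Matrix ι ι A} :
    N ∈ secondaryAddSubgroup π ↔ (∀ i j, N i j ∈ π) ∧ ∀ i, N i i ∈ π ^ 2 :=
  Iff.rfl

variable [Fintype ι] [DecidableEq ι]

def diagModSubring (π : Ideal A) : Subring (Matrix ι ι A) :=
  (diagonalRingHom ι (A ⧸ π)).range.comap (Ideal.Quotient.mk π).mapMatrix

variable {π : Ideal A}

theorem mem_diagModSubring {M : Matrix ι ι A} :
    M ∈ diagModSubring π ↔ ∀ i j, i ≠ j → M i j ∈ π := by
  have hdiag : M ∈ diagModSubring π ↔ ((Ideal.Quotient.mk π).mapMatrix M).IsDiag :=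
    ⟨fun ⟨d, hd⟩ => hd ▸ isDiag_diagonal d, fun h => ⟨_, h.diagonal_diag⟩⟩
  simp only [hdiag, IsDiag, Pairwise, RingHom.mapMatrix_apply, map_apply,
    Ideal.Quotient.eq_zero_iff_mem]

theorem adjugate_mem_diagModSubring {M : Matrix ι ι A} (hM : M ∈ diagModSubring π) :
    adjugate M ∈ diagModSubring π := by
  obtain ⟨d, hd⟩ := Subring.mem_comap.mp hM
  refine Subring.mem_comap.mpr ⟨fun i => ∏ j ∈ Finset.univ.erase i, d j, ?_⟩
  rw [RingHom.map_adjugate, ← hd]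
  exact (adjugate_diagonal d).symm

theorem mul_mem_secondaryAddSubgroup_left {M N : Matrix ι ι A} (hM : M ∈ diagModSubring π)
    (hN : N ∈ secondaryAddSubgroup π) : M * N ∈ secondaryAddSubgroup π := by
  rw [mem_diagModSubring] at hM
  rw [mem_secondaryAddSubgroup] at hN ⊢
  refine ⟨fun i j => Ideal.sum_mem _ fun k _ => Ideal.mul_mem_left _ _ (hN.1 k j),
    fun i => Ideal.sum_mem _ fun k _ => ?_⟩
  rcases eq_or_ne i k with rfl | hik
  · exact Ideal.mul_mem_left _ _ (hN.2 i)
  · rw [pow_two]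
    exact Ideal.mul_mem_mul (hM i k hik) (hN.1 k i)

theorem mul_mem_secondaryAddSubgroup_right {M N : Matrix ι ι A}
    (hN : N ∈ secondaryAddSubgroup π) (hM : M ∈ diagModSubring π) :
    N * M ∈ secondaryAddSubgroup π := by
  rw [mem_diagModSubring] at hM
  rw [mem_secondaryAddSubgroup] at hN ⊢
  refine ⟨fun i j => Ideal.sum_mem _ fun k _ => Ideal.mul_mem_right _ _ (hN.1 i k),
    fun i => Ideal.sum_mem _ fun k _ => ?_⟩
  rcases eq_or_ne k i with rfl | hki
  · exact Ideal.mul_mem_right _ _ (hN.2 k)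
  · rw [pow_two]
    exact Ideal.mul_mem_mul (hN.1 i k) (hM k i hki)

theorem mem_diagModSubring_of_sub_one_mem {M : Matrix ι ι A}
    (hM : M - 1 ∈ secondaryAddSubgroup π) : M ∈ diagModSubring π :=
  mem_diagModSubring.mpr fun i j hij => by
    simpa [one_apply_ne hij] using hM.1 i j

namespace SpecialLinearGroup

variable (π) in
def diagModSubgroup : Subgroup (SpecialLinearGroup ι A) where
  carrier := {g | (g : Matrix ι ι A) ∈ diagModSubring π}
  mul_mem' {g h} hg hh := by
    change ((g * h : SpecialLinearGroup ι A) : Matrix ι ι A) ∈ diagModSubring π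
    rw [coe_mul]
    exact Subring.mul_mem _ hg hh
  one_mem' := (diagModSubring π).one_mem
  inv_mem' {g} hg := by
    change ((g⁻¹ : SpecialLinearGroup ι A) : Matrix ι ι A) ∈ diagModSubring π
    rw [coe_inv]
    exact adjugate_mem_diagModSubring hg

variable (π) in
def secondaryCongruenceSubgroup : Subgroup (SpecialLinearGroup ι A) where
  carrier := {g | (g : Matrix ι ι A) - 1 ∈ secondaryAddSubgroup π}
  mul_mem' {g h} hg hh := by
    change ((g * h : SpecialLinearGroup ι A) : Matrix ι ι A) - 1 ∈ secondaryAddSubgroup π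
    rw [coe_mul, ← sub_add_sub_cancel _ (h : Matrix ι ι A), ← sub_one_mul]
    exact add_mem
      (mul_mem_secondaryAddSubgroup_right hg (mem_diagModSubring_of_sub_one_mem hh)) hh
  one_mem' := by simp
  inv_mem' {g} hg := by
    change ((g⁻¹ : SpecialLinearGroup ι A) : Matrix ι ι A) - 1 ∈ secondaryAddSubgroup π
    have hinv : ((g⁻¹ : SpecialLinearGroup ι A) : Matrix ι ι A) - 1
        = -(((g : Matrix ι ι A) - 1) * (g⁻¹ : SpecialLinearGroup ι A)) := by
      rw [sub_mul, ← coe_mul, mul_inv_cancel, coe_one, one_mul, neg_sub]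
    rw [hinv]
    exact neg_mem (mul_mem_secondaryAddSubgroup_right hg
      ((diagModSubgroup π).inv_mem (mem_diagModSubring_of_sub_one_mem hg)))

theorem secondaryCongruenceSubgroup_le_diagModSubgroup :
    secondaryCongruenceSubgroup π ≤ diagModSubgroup (ι := ι) π :=
  fun _ hg => mem_diagModSubring_of_sub_one_mem hg

theorem conj_mem_secondaryCongruenceSubgroup {g x : SpecialLinearGroup ι A}
    (hg : g ∈ diagModSubgroup π) (hx : x ∈ secondaryCongruenceSubgroup π) :
    g * x * g⁻¹ ∈ secondaryCongruenceSubgroup π := by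
  change ((g * x * g⁻¹ : SpecialLinearGroup ι A) : Matrix ι ι A) - 1 ∈ secondaryAddSubgroup π
  have hconj : ((g * x * g⁻¹ : SpecialLinearGroup ι A) : Matrix ι ι A) - 1
      = (g : Matrix ι ι A) * ((x : Matrix ι ι A) - 1) * (g⁻¹ : SpecialLinearGroup ι A) := by
    rw [coe_mul, coe_mul, mul_sub, sub_mul, mul_one, ← coe_mul g g⁻¹, mul_inv_cancel,
      coe_one]
  rw [hconj]
  exact mul_mem_secondaryAddSubgroup_right (mul_mem_secondaryAddSubgroup_left hg hx)
    ((diagModSubgroup π).inv_mem hg)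

end SpecialLinearGroup

end Matrix

open Matrix.SpecialLinearGroup

theorem coe_diagModSubgroup_eq_Ωset (A : Type) [CommRing A] (π : Ideal A) (n : ℕ) :
    ((diagModSubgroup π : Subgroup (SL n A)) : Set (SL n A)) = Ωset A n π :=
  Set.ext fun _ => mem_diagModSubring

theorem coe_secondaryCongruenceSubgroup_eq_Δset (A : Type) [CommRing A] (π : Ideal A) (n : ℕ) :
    ((secondaryCongruenceSubgroup π : Subgroup (SL n A)) : Set (SL n A)) = Δset A n π :=
  Set.ext fun g => by
    change (g : Matrix (Fin n) (Fin n) A) - 1 ∈ secondaryAddSubgroup π ↔ _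
    simp only [mem_secondaryAddSubgroup, Matrix.sub_apply, one_apply_eq]
    rfl

theorem secondaryCongruence_normal_in_Omega_general (A : Type) [CommRing A] (π : Ideal A) (n : ℕ) :
    ∃ D O : Subgroup (SL n A), (D : Set (SL n A)) = Δset A n π ∧
      (O : Set (SL n A)) = Ωset A n π ∧ D ≤ O ∧
      ∀ g ∈ O, ∀ x ∈ D, g * x * g⁻¹ ∈ D :=
  ⟨secondaryCongruenceSubgroup π, diagModSubgroup π,
    coe_secondaryCongruenceSubgroup_eq_Δset A π n, coe_diagModSubgroup_eq_Ωset A π n,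
    secondaryCongruenceSubgroup_le_diagModSubgroup,
    fun _ hg _ hx => conj_mem_secondaryCongruenceSubgroup hg hx⟩

/-- For a commutative unital ring `A`, an ideal `π` of `A` and `n ≥ 2`, the secondary
congruence subgroup `Δ_n(π)` is a normal subgroup of `Ω_n(π)`: both sets are (carriers of)
subgroups of `SL_n(A)`, `Δ_n(π) ⊆ Ω_n(π)`, and `Δ_n(π)` is stable under conjugation by the
elements of `Ω_n(π)`. -/
theorem secondaryCongruence_normal_in_Omega (A : Type) [CommRing A] (π : Ideal A) (n : ℕ)
    (hn : 2 ≤ n) :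
    ∃ D O : Subgroup (SL n A), (D : Set (SL n A)) = Δset A n π ∧
      (O : Set (SL n A)) = Ωset A n π ∧ D ≤ O ∧
      ∀ g ∈ O, ∀ x ∈ D, g * x * g⁻¹ ∈ D :=
  secondaryCongruence_normal_in_Omega_general A π n
end

section
/- Let A be a commutative unital ring, let π be an ideal of A, and let n ≥ 2. The reduction map r : Γ_n(π) → gl_n(π/π²) given by g ↦ (g − 1_n) mod π² is a group homomorphism from Γ_n(π) to the additive group of n×n matrices over π/π², its image lies in the zero-trace subgroup sl_n(π/π²), it is surjective onto sl_n(π/π²), and its kernel is Γ_n(π²). -/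
/-! Writing `g = 1 + X` with `X ≡ 0 mod π`, the identity
`gh - 1 = (g - 1)(h - 1) + (g - 1) + (h - 1)` makes `r` additive, and in the permutation
expansion of `det (1 + X)` every non-identity permutation contributes a product of at least two
entries of `X`, so `1 = det g ≡ 1 + tr (g - 1) mod π²`. Conversely, a trace-zero matrix over
`π/π²` is a sum of the `x E_pq` (`p ≠ q`), which are images of transvections, and the
`x (E_pp - E_qq)`: the conjugate of the transvection `1 + x E_qp` by `1 + E_pq` is
`1 + x (E_pp - E_qq + E_qp - E_pq)`, and two more transvections cancel the off-diagonal part. -/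

open Matrix

/-- The principal congruence subgroup `Γ_n(π) = {g ∈ SL_n(A) : g ≡ 1_n mod π}`, as a set. -/
def Γset (A : Type) [CommRing A] (n : ℕ) (π : Ideal A) : Set (SL n A) :=
  {g | ∀ p q : Fin n, (g : Matrix (Fin n) (Fin n) A) p q - (1 : Matrix (Fin n) (Fin n) A) p q ∈ π}

/-- The reduction map `r : Γ_n(π) → gl_n(π/π²)`, `g ↦ (g − 1_n) mod π²`; here
`gl_n(π/π²)` is realized as the additive group of `n×n` matrices over `A/π²` whose entries
lie in the image ideal `π.map (Ideal.Quotient.mk (π^2))`, i.e. in `π/π²`. -/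
def redMap (A : Type) [CommRing A] (n : ℕ) (π : Ideal A) (g : SL n A) :
    Matrix (Fin n) (Fin n) (A ⧸ π ^ 2) := fun p q =>
  Ideal.Quotient.mk (π ^ 2)
    ((g : Matrix (Fin n) (Fin n) A) p q - (1 : Matrix (Fin n) (Fin n) A) p q)

namespace Ideal

variable {R : Type*} [CommRing R] (I : Ideal R) {ι : Type*} [Fintype ι] [DecidableEq ι]

theorem mul_mem_matrix_mul {J : Ideal R} {X Y : Matrix ι ι R} (hX : X ∈ I.matrix ι)
    (hY : Y ∈ J.matrix ι) : X * Y ∈ (I * J).matrix ι :=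
  (mem_matrix _ _ _).2 fun i j => sum_mem _ fun k _ => mul_mem_mul (hX i k) (hY k j)

theorem map_quotientMk_eq_zero_iff (X : Matrix ι ι R) :
    X.map (Quotient.mk I) = 0 ↔ X ∈ I.matrix ι := by
  simp only [← Matrix.ext_iff, Matrix.map_apply, Matrix.zero_apply, Quotient.eq_zero_iff_mem,
    mem_matrix]

theorem prod_one_add_sub_one_sub_sum_mem_sq {κ : Type*} (s : Finset κ) {f : κ → R}
    (hf : ∀ i ∈ s, f i ∈ I) : ∏ i ∈ s, (1 + f i) - 1 - ∑ i ∈ s, f i ∈ I ^ 2 := by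
  classical
  induction s using Finset.induction_on with
  | empty => simp
  | insert a s ha ih =>
    have hfs : ∀ i ∈ s, f i ∈ I := fun i hi => hf i (Finset.mem_insert_of_mem hi)
    have hprod : ∏ i ∈ s, (1 + f i) - 1 ∈ I := by
      simpa using I.add_mem (pow_le_self two_ne_zero (ih hfs)) (sum_mem _ hfs)
    have hfa : f a * (∏ i ∈ s, (1 + f i) - 1) ∈ I ^ 2 :=
      pow_two I ▸ mul_mem_mul (hf a (Finset.mem_insert_self a s)) hprod
    rw [Finset.prod_insert ha, Finset.sum_insert ha]
    convert (I ^ 2).add_mem (ih hfs) hfa using 1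
    ring

theorem prod_one_add_apply_perm_mem_sq {X : Matrix ι ι R} (hX : X ∈ I.matrix ι)
    {σ : Equiv.Perm ι} (hσ : σ ≠ 1) : ∏ i, (1 + X) (σ i) i ∈ I ^ 2 := by
  have hsupp : ∏ i ∈ σ.support, (1 + X) (σ i) i ∈ I ^ 2 := by
    refine pow_le_pow_right (Equiv.Perm.two_le_card_support_of_ne_one hσ) ?_
    rw [← Finset.prod_const]
    refine prod_mem_prod fun i hi => ?_
    rw [Matrix.add_apply, one_apply_ne (Equiv.Perm.mem_support.1 hi), zero_add]
    exact hX _ _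
  rw [← Finset.prod_mul_prod_compl σ.support]
  exact mul_mem_right _ _ hsupp

theorem det_one_add_sub_one_sub_trace_mem_sq {X : Matrix ι ι R} (hX : X ∈ I.matrix ι) :
    det (1 + X) - 1 - trace X ∈ I ^ 2 := by
  have hdiag : ∏ i, (1 + X) i i - 1 - trace X ∈ I ^ 2 := by
    simpa [Matrix.add_apply, trace] using
      I.prod_one_add_sub_one_sub_sum_mem_sq Finset.univ fun i _ => hX i i
  have hoff : ∑ σ ∈ Finset.univ.erase 1, (Equiv.Perm.sign σ : R) * ∏ i, (1 + X) (σ i) i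
      ∈ I ^ 2 :=
    sum_mem _ fun σ hσ => mul_mem_left _ _
      (I.prod_one_add_apply_perm_mem_sq hX (Finset.ne_of_mem_erase hσ))
  rw [det_apply', ← Finset.add_sum_erase _ _ (Finset.mem_univ 1)]
  convert (I ^ 2).add_mem hdiag hoff using 1
  simp only [Equiv.Perm.sign_one, Units.val_one, Int.cast_one, one_mul, Equiv.Perm.one_apply]
  ring

end Ideal

namespace Matrix

theorem mem_addSubmonoid_of_trace_eq_zero {ι R : Type*} [Fintype ι] [DecidableEq ι]
    [AddCommGroup R] (S : AddSubmonoid (Matrix ι ι R)) {M : Matrix ι ι R} (htr : trace M = 0)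
    (hoff : ∀ p q, p ≠ q → single p q (M p q) ∈ S)
    (hdiag : ∀ p q, p ≠ q → single p p (M p p) - single q q (M p p) ∈ S) : M ∈ S := by
  cases isEmpty_or_nonempty ι with
  | inl _ => simp [Subsingleton.elim M 0]
  | inr hne =>
    obtain ⟨z⟩ := hne
    have hdecomp : M = ∑ p, ∑ q,
        (single p q (M p q) - if p = q then single z z (M p p) else 0) := by
      have hz := congrArg (singleAddMonoidHom z z : R →+ Matrix ι ι R) htr
      simp only [trace, map_sum, map_zero, singleAddMonoidHom_apply, diag_apply] at hz
      simp only [Finset.sum_sub_distrib, Finset.sum_ite_eq, Finset.mem_univ, if_true, hz,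
        sub_zero]
      exact matrix_eq_sum_single M
    rw [hdecomp]
    refine sum_mem fun p _ => sum_mem fun q _ => ?_
    by_cases hpq : p = q
    · subst hpq
      by_cases hpz : p = z
      · simp [hpz]
      · simpa using hdiag p z hpz
    · simpa [hpq] using hoff p q hpq

theorem SpecialLinearGroup.transvection_conj_transvection_sub_one {ι F : Type*} [Fintype ι]
    [DecidableEq ι] [CommRing F] {p q : ι} (hpq : p ≠ q) (x : F) :
    ((transvection hpq 1 * transvection hpq.symm x * transvection hpq (-1) :
        SpecialLinearGroup ι F) : Matrix ι ι F) - 1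
      = single p p x - single q q x + single q p x - single p q x := by
  have hpqp : single p q (1 : F) * single p q (-1) = 0 :=
    single_mul_single_of_ne _ _ _ _ hpq.symm _
  simp only [coe_mul, transvection_coe, add_mul, mul_add, one_mul, mul_one,
    single_mul_single_same, hpqp]
  ext a b
  simp only [add_apply, sub_apply, zero_apply, single, of_apply, one_apply]
  split_ifs <;> ring

theorem SpecialLinearGroup.coe_mul_sub_one {ι R : Type*} [Fintype ι] [DecidableEq ι]
    [CommRing R] (g h : SpecialLinearGroup ι R) :
    ((g * h : SpecialLinearGroup ι R) : Matrix ι ι R) - 1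
      = ((g : Matrix ι ι R) - 1) * ((h : Matrix ι ι R) - 1) + ((g : Matrix ι ι R) - 1)
        + ((h : Matrix ι ι R) - 1) := by
  rw [coe_mul]
  noncomm_ring

end Matrix

variable {A : Type} [CommRing A] {n : ℕ} (π : Ideal A)

theorem mem_Γset_iff {g : SL n A} :
    g ∈ Γset A n π ↔ (g : Matrix (Fin n) (Fin n) A) - 1 ∈ π.matrix (Fin n) :=
  Iff.rfl

theorem redMap_eq_map (g : SL n A) :
    redMap A n π g = ((g : Matrix (Fin n) (Fin n) A) - 1).map (Ideal.Quotient.mk (π ^ 2)) :=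
  rfl

theorem mul_mem_Γset {g h : SL n A} (hg : g ∈ Γset A n π) (hh : h ∈ Γset A n π) :
    g * h ∈ Γset A n π := by
  rw [mem_Γset_iff, SpecialLinearGroup.coe_mul_sub_one]
  exact add_mem (add_mem (Ideal.mul_mem_left _ _ hh) hg) hh

theorem redMap_mul {g h : SL n A} (hg : g ∈ Γset A n π) (hh : h ∈ Γset A n π) :
    redMap A n π (g * h) = redMap A n π g + redMap A n π h := by
  have hsq : ((g : Matrix (Fin n) (Fin n) A) - 1) * ((h : Matrix (Fin n) (Fin n) A) - 1)
      ∈ (π ^ 2).matrix (Fin n) :=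
    pow_two π ▸ π.mul_mem_matrix_mul hg hh
  rw [redMap_eq_map, redMap_eq_map, redMap_eq_map, SpecialLinearGroup.coe_mul_sub_one,
    Matrix.map_add _ (map_add _), Matrix.map_add _ (map_add _),
    ((π ^ 2).map_quotientMk_eq_zero_iff _).2 hsq, zero_add]

theorem trace_redMap {g : SL n A} (hg : g ∈ Γset A n π) : trace (redMap A n π g) = 0 := by
  have h := π.det_one_add_sub_one_sub_trace_mem_sq ((mem_Γset_iff π).1 hg)
  rw [add_sub_cancel, g.prop, sub_self, zero_sub, neg_mem_iff] at h
  rw [redMap_eq_map, ← AddMonoidHom.map_trace, Ideal.Quotient.eq_zero_iff_mem]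
  exact h

theorem redMap_eq_zero_iff {g : SL n A} : redMap A n π g = 0 ↔ g ∈ Γset A n (π ^ 2) :=
  (π ^ 2).map_quotientMk_eq_zero_iff _

def redImage : AddSubmonoid (Matrix (Fin n) (Fin n) (A ⧸ π ^ 2)) where
  carrier := redMap A n π '' Γset A n π
  zero_mem' := ⟨1, fun p q => by simp, by simp [redMap_eq_map]⟩
  add_mem' := by
    rintro _ _ ⟨g, hg, rfl⟩ ⟨h, hh, rfl⟩
    exact ⟨g * h, mul_mem_Γset π hg hh, redMap_mul π hg hh⟩

theorem single_mem_redImage {p q : Fin n} (hpq : p ≠ q) {x : A} (hx : x ∈ π) :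
    single p q (Ideal.Quotient.mk (π ^ 2) x) ∈ redImage π := by
  refine ⟨SpecialLinearGroup.transvection hpq x, ?_, ?_⟩
  · rw [mem_Γset_iff, SpecialLinearGroup.transvection_coe, add_sub_cancel_left]
    exact (single_mem_matrix π.zero_mem).2 hx
  · rw [redMap_eq_map, SpecialLinearGroup.transvection_coe, add_sub_cancel_left, map_single]

theorem single_sub_single_mem_redImage {p q : Fin n} (hpq : p ≠ q) {x : A} (hx : x ∈ π) :
    single p p (Ideal.Quotient.mk (π ^ 2) x) - single q q (Ideal.Quotient.mk (π ^ 2) x)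
      ∈ redImage π := by
  have hc := SpecialLinearGroup.transvection_conj_transvection_sub_one hpq x
  have hsingle : ∀ i j : Fin n, single i j x ∈ π.matrix (Fin n) := fun i j =>
    (single_mem_matrix π.zero_mem).2 hx
  have hcmem : (single p p x - single q q x + single q p x - single p q x).map
      (Ideal.Quotient.mk (π ^ 2)) ∈ redImage π := by
    refine ⟨SpecialLinearGroup.transvection hpq 1 * SpecialLinearGroup.transvection hpq.symm x *
      SpecialLinearGroup.transvection hpq (-1), ?_, ?_⟩
    · rw [mem_Γset_iff, hc]
      exact sub_mem (add_mem (sub_mem (hsingle _ _) (hsingle _ _)) (hsingle _ _)) (hsingle _ _)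
    · rw [redMap_eq_map, hc]
  have hsum := add_mem (add_mem hcmem (single_mem_redImage π hpq hx))
    (single_mem_redImage π hpq.symm (π.neg_mem hx))
  simp only [Matrix.map_sub _ (map_sub _), Matrix.map_add _ (map_add _), map_single, map_neg,
    ← single_neg] at hsum
  convert hsum using 1
  abel

theorem reduction_hom_surjective_kernel_general (A : Type) [CommRing A] (π : Ideal A) (n : ℕ) :
    (∀ g ∈ Γset A n π, ∀ h ∈ Γset A n π,
        redMap A n π (g * h) = redMap A n π g + redMap A n π h) ∧
    (∀ g ∈ Γset A n π,
        (∀ p q : Fin n, redMap A n π g p q ∈ π.map (Ideal.Quotient.mk (π ^ 2))) ∧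
        Matrix.trace (redMap A n π g) = 0) ∧
    (∀ M : Matrix (Fin n) (Fin n) (A ⧸ π ^ 2),
        (∀ p q : Fin n, M p q ∈ π.map (Ideal.Quotient.mk (π ^ 2))) → Matrix.trace M = 0 →
        ∃ g ∈ Γset A n π, redMap A n π g = M) ∧
    (∀ g ∈ Γset A n π, (redMap A n π g = 0 ↔ g ∈ Γset A n (π ^ 2))) := by
  refine ⟨fun g hg h hh => redMap_mul π hg hh,
    fun g hg => ⟨fun p q => Ideal.mem_map_of_mem _ (hg p q), trace_redMap π hg⟩,
    fun M hM htr => ?_, fun g _ => redMap_eq_zero_iff π⟩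
  choose X hXπ hX using fun p q =>
    (Ideal.mem_map_iff_of_surjective _ Ideal.Quotient.mk_surjective).1 (hM p q)
  refine mem_addSubmonoid_of_trace_eq_zero (redImage π) htr (fun p q hpq => ?_)
    (fun p q hpq => ?_)
  · rw [← hX p q]
    exact single_mem_redImage π hpq (hXπ p q)
  · rw [← hX p p]
    exact single_sub_single_mem_redImage π hpq (hXπ p p)

/-- For `n ≥ 2`, the reduction map `r : Γ_n(π) → gl_n(π/π²)`, `g ↦ (g − 1_n) mod π²`, is a
group homomorphism (from the multiplicative group `Γ_n(π)` to the additive group of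
matrices), its image lies in the zero-trace subgroup `sl_n(π/π²)`, it is surjective onto
`sl_n(π/π²)`, and its kernel is `Γ_n(π²)`. -/
theorem reduction_hom_surjective_kernel (A : Type) [CommRing A] (π : Ideal A) (n : ℕ)
    (hn : 2 ≤ n) :
    (∀ g ∈ Γset A n π, ∀ h ∈ Γset A n π,
        redMap A n π (g * h) = redMap A n π g + redMap A n π h) ∧
    (∀ g ∈ Γset A n π,
        (∀ p q : Fin n, redMap A n π g p q ∈ π.map (Ideal.Quotient.mk (π ^ 2))) ∧
        Matrix.trace (redMap A n π g) = 0) ∧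
    (∀ M : Matrix (Fin n) (Fin n) (A ⧸ π ^ 2),
        (∀ p q : Fin n, M p q ∈ π.map (Ideal.Quotient.mk (π ^ 2))) → Matrix.trace M = 0 →
        ∃ g ∈ Γset A n π, redMap A n π g = M) ∧
    (∀ g ∈ Γset A n π, (redMap A n π g = 0 ↔ g ∈ Γset A n (π ^ 2))) :=
  reduction_hom_surjective_kernel_general A π n
end

section
/- Let N ≥ 4 be an integer. In SL_2(ℤ), the matrix ω = [[1+N², −N²],[N², 1−N²]] lies in E_2(N²ℤ) but does not lie in F_2(Nℤ); in particular, E_2(N²ℤ) is not contained in F_2(Nℤ). -/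
open Matrix

/-- The matrix `ω = [[1+N², −N²],[N², 1−N²]] ∈ SL_2(ℤ)`. -/
def omegaMat (N : ℤ) : SL 2 ℤ :=
  ⟨!![1 + N ^ 2, -N ^ 2; N ^ 2, 1 - N ^ 2], by rw [Matrix.det_fin_two_of]; ring⟩


/-! The elements of `F₂(Nℤ)` are alternating products of upper and lower elementary matrices
whose coefficients are nonzero multiples of `N`. For `|N| ≥ 3` these act on `ℤ²` by ping-pong:
`e₁₂(a)` sends every nonzero vector with `|x| ≤ |y|` into `{|y| < |x|}` and `e₂₁(a)` sends every
nonzero vector with `|y| ≤ |x|` into `{|x| < |y|}`. Hence a nontrivial element of `F₂(Nℤ)` moves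
`(1, 1)` off the diagonal `|x| = |y|`, whereas `ω` fixes `(1, 1)`. On the other hand
`ω = e₂₁(1) e₁₂(-N²) e₂₁(1)⁻¹` is a generator of `E₂(N²ℤ)`. -/

/-- `syllable true a = e₁₂(a)` and `syllable false a = e₂₁(a)`. -/
def syllable : Bool → ℤ → SL 2 ℤ
  | true, a => elem ℤ 0 1 (by decide) a
  | false, a => elem ℤ 1 0 (by decide) a

theorem syllable_zero (b : Bool) : syllable b 0 = 1 := by
  cases b <;> exact Subtype.ext (Matrix.transvection_zero _ _)

theorem syllable_mul_syllable (b : Bool) (a c : ℤ) :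
    syllable b a * syllable b c = syllable b (a + c) := by
  cases b <;> exact Subtype.ext (Matrix.transvection_mul_transvection_same _ _ (by decide) a c)

theorem syllable_inv (b : Bool) (a : ℤ) : (syllable b a)⁻¹ = syllable b (-a) :=
  inv_eq_of_mul_eq_one_right (by rw [syllable_mul_syllable, add_neg_cancel, syllable_zero])

theorem exists_syllable_eq_elem (i j : Fin 2) (hij : i ≠ j) (a : ℤ) :
    ∃ b, syllable b a = elem ℤ i j hij a := by
  fin_cases i <;> fin_cases j
  exacts [absurd rfl hij, ⟨true, rfl⟩, ⟨false, rfl⟩, absurd rfl hij]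

def altProd : Bool → List ℤ → SL 2 ℤ
  | _, [] => 1
  | b, a :: l => syllable b a * altProd (!b) l

theorem exists_altProd_eq_syllable_mul_altProd {N : ℤ} (c : Bool) {m : ℤ} (hm : N ∣ m)
    (b : Bool) {l : List ℤ} (hl : ∀ a ∈ l, a ≠ 0 ∧ N ∣ a) :
    ∃ b' l', (∀ a ∈ l', a ≠ 0 ∧ N ∣ a) ∧ altProd b' l' = syllable c m * altProd b l := by
  rcases eq_or_ne m 0 with rfl | hm0
  · exact ⟨b, l, hl, by rw [syllable_zero, one_mul]⟩
  rcases l with _ | ⟨k, t⟩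
  · exact ⟨c, [m], by simpa using ⟨hm0, hm⟩, rfl⟩
  have ht : ∀ a ∈ t, a ≠ 0 ∧ N ∣ a := fun a ha => hl a (List.mem_cons_of_mem k ha)
  rcases Bool.eq_or_eq_not c b with rfl | rfl
  · rcases eq_or_ne (m + k) 0 with hmk | hmk
    · refine ⟨!c, t, ht, ?_⟩
      rw [altProd, ← mul_assoc, syllable_mul_syllable, hmk, syllable_zero, one_mul]
    · refine ⟨c, (m + k) :: t, ?_, ?_⟩
      · simpa [hmk] using ⟨dvd_add hm (hl k (by simp)).2, ht⟩
      · rw [altProd, altProd, ← mul_assoc, syllable_mul_syllable]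
  · refine ⟨!b, m :: k :: t, ?_, by rw [altProd, Bool.not_not]⟩
    simpa using ⟨⟨hm0, hm⟩, hl k (by simp), ht⟩

theorem exists_altProd_eq_of_mem_Fgrp {N : ℤ} {g : SL 2 ℤ}
    (hg : g ∈ Fgrp ℤ 2 (Ideal.span {N})) :
    ∃ b l, (∀ a ∈ l, a ≠ 0 ∧ N ∣ a) ∧ altProd b l = g := by
  induction hg using Subgroup.closure_induction_left with
  | one => exact ⟨true, [], by simp, rfl⟩
  | mul_left x hx y _ ih =>
    obtain ⟨i, j, hij, a, ha, rfl⟩ := hx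
    obtain ⟨c, hc⟩ := exists_syllable_eq_elem i j hij a
    obtain ⟨b, l, hl, rfl⟩ := ih
    rw [← hc]
    exact exists_altProd_eq_syllable_mul_altProd c (Ideal.mem_span_singleton.mp ha) b hl
  | inv_mul_cancel x hx y _ ih =>
    obtain ⟨i, j, hij, a, ha, rfl⟩ := hx
    obtain ⟨c, hc⟩ := exists_syllable_eq_elem i j hij a
    obtain ⟨b, l, hl, rfl⟩ := ih
    rw [← hc, syllable_inv]
    exact exists_altProd_eq_syllable_mul_altProd c
      (dvd_neg.mpr (Ideal.mem_span_singleton.mp ha)) b hl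

def PingPongRegion : Bool → (Fin 2 → ℤ) → Prop
  | true, v => |v 1| < |v 0|
  | false, v => |v 0| < |v 1|

theorem PingPongRegion.not_of_bnot {b : Bool} {v : Fin 2 → ℤ} (h : PingPongRegion (!b) v) :
    ¬ PingPongRegion b v := by
  cases b <;> simp only [PingPongRegion, Bool.not_true, Bool.not_false, not_lt] at h ⊢ <;>
    exact h.le

theorem PingPongRegion.ne_zero {b : Bool} {v : Fin 2 → ℤ} (h : PingPongRegion b v) : v ≠ 0 := by
  rintro rfl
  cases b <;> simp [PingPongRegion] at h

theorem abs_lt_abs_add_mul {R : Type*} [CommRing R] [LinearOrder R] [IsStrictOrderedRing R]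
    {x y m : R} (hm : 3 ≤ |m|) (hxy : |x| ≤ |y|) (hne : x ≠ 0 ∨ y ≠ 0) :
    |y| < |x + m * y| := by
  have hy : 0 < |y| := hne.elim (fun hx => (abs_pos.mpr hx).trans_le hxy) abs_pos.mpr
  have h := abs_sub_abs_le_abs_sub (m * y) (-x)
  rw [abs_mul, abs_neg, sub_neg_eq_add, add_comm] at h
  nlinarith

theorem syllable_true_mulVec (m : ℤ) (v : Fin 2 → ℤ) :
    (syllable true m : Matrix (Fin 2) (Fin 2) ℤ) *ᵥ v = ![v 0 + m * v 1, v 1] := by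
  ext i
  fin_cases i <;> simp [syllable, elem, Matrix.transvection, Matrix.add_mulVec]

theorem syllable_false_mulVec (m : ℤ) (v : Fin 2 → ℤ) :
    (syllable false m : Matrix (Fin 2) (Fin 2) ℤ) *ᵥ v = ![v 0, v 1 + m * v 0] := by
  ext i
  fin_cases i <;> simp [syllable, elem, Matrix.transvection, Matrix.add_mulVec]

theorem syllable_mulVec_mem_pingPongRegion {b : Bool} {m : ℤ} (hm : 3 ≤ |m|)
    {v : Fin 2 → ℤ} (hv : ¬ PingPongRegion b v) (hv0 : v ≠ 0) :
    PingPongRegion b ((syllable b m : Matrix (Fin 2) (Fin 2) ℤ) *ᵥ v) := by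
  have hne : v 0 ≠ 0 ∨ v 1 ≠ 0 := by
    rw [← not_and_or]
    exact fun h => hv0 (funext (Fin.forall_fin_two.mpr h))
  cases b
  · rw [syllable_false_mulVec]
    exact abs_lt_abs_add_mul hm (not_lt.mp hv) hne.symm
  · rw [syllable_true_mulVec]
    exact abs_lt_abs_add_mul hm (not_lt.mp hv) hne

theorem not_pingPongRegion_one_one (b : Bool) : ¬ PingPongRegion b ![1, 1] := by
  cases b <;> simp [PingPongRegion]

theorem altProd_mulVec_one_one_mem_pingPongRegion (b : Bool) (m : ℤ) (l : List ℤ)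
    (hl : ∀ a ∈ m :: l, 3 ≤ |a|) :
    PingPongRegion b ((altProd b (m :: l) : Matrix (Fin 2) (Fin 2) ℤ) *ᵥ ![1, 1]) := by
  induction l generalizing b m with
  | nil =>
    rw [altProd, altProd, mul_one]
    exact syllable_mulVec_mem_pingPongRegion (hl m (by simp)) (not_pingPongRegion_one_one b)
      (by simp)
  | cons k t ih =>
    have hrest := ih (!b) k fun a ha => hl a (List.mem_cons_of_mem m ha)
    rw [altProd, Matrix.SpecialLinearGroup.coe_mul, ← Matrix.mulVec_mulVec]
    exact syllable_mulVec_mem_pingPongRegion (hl m (by simp)) hrest.not_of_bnot hrest.ne_zero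

theorem notMem_Fgrp_of_mulVec_one_one {N : ℤ} (hN : 3 ≤ |N|) {g : SL 2 ℤ} (hg1 : g ≠ 1)
    (hg : (g : Matrix (Fin 2) (Fin 2) ℤ) *ᵥ ![1, 1] = ![1, 1]) :
    g ∉ Fgrp ℤ 2 (Ideal.span {N}) := by
  intro hgF
  obtain ⟨b, l, hl, rfl⟩ := exists_altProd_eq_of_mem_Fgrp hgF
  rcases l with _ | ⟨m, t⟩
  · exact hg1 rfl
  have h3 : ∀ a ∈ m :: t, 3 ≤ |a| := fun a ha =>
    hN.trans (Int.le_of_dvd (abs_pos.mpr (hl a ha).1) ((abs_dvd_abs N a).mpr (hl a ha).2))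
  exact not_pingPongRegion_one_one b (hg ▸ altProd_mulVec_one_one_mem_pingPongRegion b m t h3)

theorem omegaMat_eq_conj (N : ℤ) :
    omegaMat N = syllable false 1 * syllable true (-N ^ 2) * (syllable false 1)⁻¹ := by
  rw [syllable_inv]
  ext i j
  simp only [Matrix.SpecialLinearGroup.coe_mul]
  fin_cases i <;> fin_cases j <;>
    simp [omegaMat, syllable, elem, Matrix.transvection, Matrix.mul_apply, Fin.sum_univ_two,
      Matrix.one_apply, sub_eq_neg_add]

theorem omegaMat_mulVec_one_one (N : ℤ) :
    (omegaMat N : Matrix (Fin 2) (Fin 2) ℤ) *ᵥ ![1, 1] = ![1, 1] := by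
  ext i
  fin_cases i <;> simp [omegaMat, Matrix.mulVec, dotProduct]

theorem omegaMat_ne_one {N : ℤ} (hN : N ≠ 0) : omegaMat N ≠ 1 := by
  intro h
  have := congr_arg (fun g : SL 2 ℤ => (g : Matrix (Fin 2) (Fin 2) ℤ) 0 1) h
  simp [omegaMat, hN] at this

theorem omegaMat_mem_Egrp (N : ℤ) : omegaMat N ∈ Egrp ℤ 2 (Ideal.span {N ^ 2}) :=
  Subgroup.subset_closure ⟨syllable false 1, Subgroup.subset_closure ⟨1, 0, by decide, 1, rfl⟩,
    0, 1, by decide, -N ^ 2, Ideal.mem_span_singleton.mpr (dvd_neg.mpr dvd_rfl),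
    omegaMat_eq_conj N⟩

/-- For an integer `N ≥ 4`, the matrix `ω = [[1+N², −N²],[N², 1−N²]]` lies in `E_2(N²ℤ)`
but not in `F_2(Nℤ)`; in particular `E_2(N²ℤ)` is not contained in `F_2(Nℤ)`. -/
theorem omega_in_E_not_in_F (N : ℤ) (hN : 4 ≤ N) :
    omegaMat N ∈ Egrp ℤ 2 (Ideal.span {N ^ 2}) ∧
    omegaMat N ∉ Fgrp ℤ 2 (Ideal.span {N}) ∧
    ¬ Egrp ℤ 2 (Ideal.span {N ^ 2}) ≤ Fgrp ℤ 2 (Ideal.span {N}) := by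
  have hE := omegaMat_mem_Egrp N
  have hF : omegaMat N ∉ Fgrp ℤ 2 (Ideal.span {N}) :=
    notMem_Fgrp_of_mulVec_one_one (le_abs.mpr (.inl (by omega)))
      (omegaMat_ne_one (by omega)) (omegaMat_mulVec_one_one N)
  exact ⟨hE, hF, fun hle => hF (hle hE)⟩
end

section
/- Let N ≥ 4 be an integer. Then F_2(Nℤ) is not a normal subgroup of Δ_2(Nℤ) in SL_2(ℤ): the matrix ω = [[1+N², −N²],[N², 1−N²]] lies in Δ_2(Nℤ), the matrix α^N with α = [[1,1],[0,1]] lies in F_2(Nℤ), but ω⁻¹·α^N·ω does not lie in F_2(Nℤ). -/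
open Matrix

/-- The matrix `α = [[1,1],[0,1]] ∈ SL_2(ℤ)`. -/
def alphaMat : SL 2 ℤ := ⟨!![1, 1; 0, 1], by rw [Matrix.det_fin_two_of]; ring⟩

/-
Ping-pong on first columns.  If in the first column of `M` the entry at `i'` is nonzero and at
least `N - 1` times the other one in absolute value, then for `|a| ≥ N ≥ 2` the same holds for
the entry at `i` in the first column of `e_{ii'}(a) M`.  Writing an element of `F_2(Nℤ)` as a
reduced alternating word in such transvections, one entry of its first column therefore
dominates the other by the factor `N - 1`.  The first column of `ω⁻¹ α^N ω` is
`(1 + N³ - N⁵, -N⁵)`, whose entries are too close in size for `N ≥ 3`.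
-/

lemma Fin.two_ne_rev (i : Fin 2) : i ≠ i.rev := by
  fin_cases i <;> decide

lemma Fin.two_eq_rev_of_ne {i j : Fin 2} (h : i ≠ j) : j = i.rev := by
  fin_cases i <;> fin_cases j <;> simp_all

namespace PingPong

def transv (p : Fin 2 × ℤ) : SL 2 ℤ := elem ℤ p.1 p.1.rev (Fin.two_ne_rev p.1) p.2

lemma transv_mul_transv (i : Fin 2) (a b : ℤ) :
    transv (i, a) * transv (i, b) = transv (i, a + b) :=
  Subtype.ext (Matrix.transvection_mul_transvection_same i i.rev (Fin.two_ne_rev i) a b)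

lemma transv_zero (i : Fin 2) : transv (i, 0) = 1 :=
  Subtype.ext (Matrix.transvection_zero i i.rev)

lemma transv_inv (i : Fin 2) (a : ℤ) : (transv (i, a))⁻¹ = transv (i, -a) :=
  inv_eq_of_mul_eq_one_right (by rw [transv_mul_transv, add_neg_cancel, transv_zero])

lemma transv_zpow (i : Fin 2) (a k : ℤ) : transv (i, a) ^ k = transv (i, k * a) := by
  induction k using Int.induction_on with
  | zero => rw [zpow_zero, zero_mul, transv_zero]
  | succ k ih => rw [_root_.zpow_add_one, ih, transv_mul_transv, add_one_mul]
  | pred k ih =>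
    rw [_root_.zpow_sub_one, ih, transv_inv, transv_mul_transv, sub_one_mul, sub_eq_add_neg]

lemma coe_transv_zero (a : ℤ) :
    (transv (0, a) : Matrix (Fin 2) (Fin 2) ℤ) = !![1, a; 0, 1] := by
  ext i j
  fin_cases i <;> fin_cases j <;> simp [transv, elem, Matrix.transvection]

def wordVal (w : List (Fin 2 × ℤ)) : SL 2 ℤ := (w.map transv).prod

@[simp] lemma wordVal_nil : wordVal [] = 1 := rfl

@[simp] lemma wordVal_cons (x : Fin 2 × ℤ) (w : List (Fin 2 × ℤ)) :
    wordVal (x :: w) = transv x * wordVal w := List.prod_cons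

def IsReduced (N : ℤ) (w : List (Fin 2 × ℤ)) : Prop :=
  w.IsChain (fun x y => x.1 ≠ y.1) ∧ ∀ x ∈ w, x.2 ≠ 0 ∧ N ∣ x.2

lemma isReduced_nil (N : ℤ) : IsReduced N [] := ⟨List.isChain_nil, by simp⟩

lemma isReduced_cons {N : ℤ} {x : Fin 2 × ℤ} {w : List (Fin 2 × ℤ)} :
    IsReduced N (x :: w) ↔
      x.2 ≠ 0 ∧ N ∣ x.2 ∧ (∀ y ∈ w.head?, x.1 ≠ y.1) ∧ IsReduced N w := by
  simp only [IsReduced, List.isChain_cons, List.forall_mem_cons]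
  tauto

lemma exists_isReduced_transv_mul {N : ℤ} {w : List (Fin 2 × ℤ)} (hw : IsReduced N w)
    (i : Fin 2) {a : ℤ} (ha : N ∣ a) :
    ∃ w', IsReduced N w' ∧ wordVal w' = transv (i, a) * wordVal w := by
  by_cases ha0 : a = 0
  · exact ⟨w, hw, by rw [ha0, transv_zero, one_mul]⟩
  rcases w with _ | ⟨⟨j, b⟩, t⟩
  · exact ⟨[(i, a)], isReduced_cons.2 ⟨ha0, ha, by simp, isReduced_nil N⟩, by simp⟩
  obtain ⟨-, hb, hjt, ht⟩ := isReduced_cons.1 hw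
  by_cases hij : i = j
  · subst hij
    have hval : transv (i, a) * wordVal ((i, b) :: t) = transv (i, a + b) * wordVal t := by
      rw [wordVal_cons, ← mul_assoc, transv_mul_transv]
    by_cases hab : a + b = 0
    · exact ⟨t, ht, by rw [hval, hab, transv_zero, one_mul]⟩
    · exact ⟨(i, a + b) :: t, isReduced_cons.2 ⟨hab, dvd_add ha hb, hjt, ht⟩, hval.symm⟩
  · exact ⟨(i, a) :: (j, b) :: t,
      isReduced_cons.2 ⟨ha0, ha, by simpa using hij, hw⟩, rfl⟩

lemma exists_isReduced_of_mem_Fgrp {N : ℤ} {g : SL 2 ℤ}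
    (hg : g ∈ Fgrp ℤ 2 (Ideal.span {N})) :
    ∃ w, IsReduced N w ∧ wordVal w = g := by
  induction hg using Subgroup.closure_induction_left with
  | one => exact ⟨[], isReduced_nil N, rfl⟩
  | mul_left x hx y _ ih =>
    obtain ⟨i, j, hij, a, ha, rfl⟩ := hx
    obtain ⟨w, hw, rfl⟩ := ih
    obtain rfl := Fin.two_eq_rev_of_ne hij
    exact exists_isReduced_transv_mul hw i (Ideal.mem_span_singleton.1 ha)
  | inv_mul_cancel x hx y _ ih =>
    obtain ⟨i, j, hij, a, ha, rfl⟩ := hx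
    obtain ⟨w, hw, rfl⟩ := ih
    obtain rfl := Fin.two_eq_rev_of_ne hij
    change ∃ w', _ ∧ _ = (transv (i, a))⁻¹ * _
    rw [transv_inv]
    exact exists_isReduced_transv_mul hw i (dvd_neg.2 (Ideal.mem_span_singleton.1 ha))

def Dominates (N : ℤ) (i : Fin 2) (v : Fin 2 → ℤ) : Prop :=
  v i ≠ 0 ∧ (N - 1) * |v i.rev| ≤ |v i|

lemma dominates_transvection_mul {N : ℤ} (hN : 2 ≤ N) {i : Fin 2} {a : ℤ} (ha : N ≤ |a|)
    {M : Matrix (Fin 2) (Fin 2) ℤ} (hM : Dominates N i.rev (fun k => M k 0)) :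
    Dominates N i (fun k => (Matrix.transvection i i.rev a * M) k 0) := by
  obtain ⟨hc, hbc⟩ := hM
  simp only [Fin.rev_rev] at hc hbc
  have hrev : i.rev ≠ i := (Fin.two_ne_rev i).symm
  simp only [Dominates, Matrix.transvection_mul_apply_same,
    Matrix.transvection_mul_apply_of_ne i i.rev _ _ hrev]
  set b := M i 0
  set c := M i.rev 0
  have hc1 : 1 ≤ |c| := Int.one_le_abs hc
  have hb : |b| ≤ |c| := by nlinarith [abs_nonneg b]
  have hac : N * |c| ≤ |a * c| := by
    rw [abs_mul]; exact mul_le_mul_of_nonneg_right ha (abs_nonneg c)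
  have key : (N - 1) * |c| ≤ |b + a * c| := by
    rw [add_comm]
    linarith [abs_sub_abs_le_abs_add (a * c) b]
  refine ⟨fun h0 => ?_, key⟩
  rw [h0, abs_zero] at key
  nlinarith

lemma transv_mem_Fgrp {N : ℤ} (i : Fin 2) {a : ℤ} (ha : N ∣ a) :
    transv (i, a) ∈ Fgrp ℤ 2 (Ideal.span {N}) :=
  Subgroup.subset_closure ⟨i, i.rev, Fin.two_ne_rev i, a, Ideal.mem_span_singleton.2 ha, rfl⟩

lemma dominates_one_col_zero (N : ℤ) :
    Dominates N 0 (fun k => (1 : Matrix (Fin 2) (Fin 2) ℤ) k 0) := by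
  simp [Dominates]

lemma dominates_wordVal {N : ℤ} (hN : 2 ≤ N) {x : Fin 2 × ℤ} {t : List (Fin 2 × ℤ)}
    (hw : IsReduced N (x :: t)) :
    Dominates N x.1 (fun k => (wordVal (x :: t) : Matrix (Fin 2) (Fin 2) ℤ) k 0) := by
  induction t generalizing x with
  | nil =>
    obtain ⟨ha0, ha, -⟩ := isReduced_cons.1 hw
    obtain ⟨i, a⟩ := x
    rw [wordVal_cons, wordVal_nil]
    fin_cases i
    · rw [mul_one]
      simp [Dominates, transv, elem, Matrix.transvection]
    · exact dominates_transvection_mul (i := 1) hN (Int.le_abs_of_dvd ha0 ha)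
        (dominates_one_col_zero N)
  | cons y t ih =>
    obtain ⟨ha0, ha, hxy, hyt⟩ := isReduced_cons.1 hw
    have hy : y.1 = x.1.rev := Fin.two_eq_rev_of_ne (hxy y rfl)
    have hcol := ih hyt
    rw [hy] at hcol
    exact dominates_transvection_mul hN (Int.le_abs_of_dvd ha0 ha) hcol

lemma exists_dominates_of_mem_Fgrp {N : ℤ} (hN : 2 ≤ N) {g : SL 2 ℤ}
    (hg : g ∈ Fgrp ℤ 2 (Ideal.span {N})) :
    ∃ i, Dominates N i (fun k => (g : Matrix (Fin 2) (Fin 2) ℤ) k 0) := by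
  obtain ⟨_ | ⟨x, t⟩, hw, rfl⟩ := exists_isReduced_of_mem_Fgrp hg
  · exact ⟨0, dominates_one_col_zero N⟩
  · exact ⟨x.1, dominates_wordVal hN hw⟩

end PingPong

open PingPong

lemma alphaMat_zpow (k : ℤ) : alphaMat ^ k = transv (0, k) := by
  have h : alphaMat = transv (0, 1) := Subtype.ext (coe_transv_zero 1).symm
  rw [h, transv_zpow, mul_one]

lemma col_zero_conj_alphaMat_zpow (N : ℤ) :
    (fun k => (((omegaMat N)⁻¹ * alphaMat ^ N * omegaMat N : SL 2 ℤ) :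
      Matrix (Fin 2) (Fin 2) ℤ) k 0) = ![1 + N ^ 3 - N ^ 5, -N ^ 5] := by
  rw [Matrix.SpecialLinearGroup.coe_mul, Matrix.SpecialLinearGroup.coe_mul,
    Matrix.SpecialLinearGroup.coe_inv, alphaMat_zpow, coe_transv_zero]
  ext k
  fin_cases k <;>
  · simp [omegaMat, Matrix.adjugate_fin_two_of, Matrix.mul_apply, Fin.sum_univ_two]
    ring

lemma not_dominates_col_zero_conj {N : ℤ} (hN : 3 ≤ N) (i : Fin 2) :
    ¬ Dominates N i ![1 + N ^ 3 - N ^ 5, -N ^ 5] := by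
  have hN2 : 9 ≤ N ^ 2 := by nlinarith
  have hN3 : 27 ≤ N ^ 3 := by nlinarith
  have hN53 : 9 * N ^ 3 ≤ N ^ 5 := by nlinarith
  have habs : |1 + N ^ 3 - N ^ 5| = N ^ 5 - N ^ 3 - 1 := by
    rw [abs_of_neg (by linarith)]; ring
  fin_cases i <;> simp [Dominates, habs, abs_of_pos (by linarith : 0 < N ^ 5)]
  · intro _
    nlinarith [mul_le_mul_of_nonneg_right (by linarith : (1 : ℤ) ≤ N - 1)
      (by linarith : 0 ≤ N ^ 5)]
  · intro _
    nlinarith [mul_le_mul_of_nonneg_right (by linarith : (2 : ℤ) ≤ N - 1)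
      (by linarith : 0 ≤ N ^ 5 - N ^ 3 - 1)]

lemma omegaMat_mem_Δset (N : ℤ) : omegaMat N ∈ Δset ℤ 2 (Ideal.span {N}) := by
  have hsq (p q : Fin 2) : (omegaMat N : Matrix (Fin 2) (Fin 2) ℤ) p q -
      (1 : Matrix (Fin 2) (Fin 2) ℤ) p q ∈ Ideal.span {N ^ 2} := by
    rw [Ideal.mem_span_singleton]
    fin_cases p <;> fin_cases q <;> simp [omegaMat]
  refine ⟨fun p q => ?_, fun p => ?_⟩
  · exact Ideal.span_singleton_le_span_singleton.2 (dvd_pow_self N two_ne_zero) (hsq p q)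
  · simpa [Ideal.span_singleton_pow] using hsq p p

/-- For an integer `N ≥ 4`, `F_2(Nℤ)` is not a normal subgroup of `Δ_2(Nℤ)` in `SL_2(ℤ)`:
the matrix `ω = [[1+N², −N²],[N², 1−N²]]` lies in `Δ_2(Nℤ)`, the matrix `α^N` with
`α = [[1,1],[0,1]]` lies in `F_2(Nℤ)`, but `ω⁻¹·α^N·ω` does not lie in `F_2(Nℤ)`. -/
theorem F_not_normal_in_Delta (N : ℤ) (hN : 4 ≤ N) :
    omegaMat N ∈ Δset ℤ 2 (Ideal.span {N}) ∧
    alphaMat ^ N ∈ Fgrp ℤ 2 (Ideal.span {N}) ∧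
    (omegaMat N)⁻¹ * alphaMat ^ N * omegaMat N ∉ Fgrp ℤ 2 (Ideal.span {N}) := by
  refine ⟨omegaMat_mem_Δset N, alphaMat_zpow N ▸ transv_mem_Fgrp 0 dvd_rfl, fun hmem => ?_⟩
  obtain ⟨i, hi⟩ := exists_dominates_of_mem_Fgrp (by omega) hmem
  rw [col_zero_conj_alphaMat_zpow] at hi
  exact not_dominates_col_zero_conj (by omega) i hi
end

section
/- Let N ≥ 4 be an integer. Then the matrices α = [[1,1],[0,1]] and β = [[1,0],[N,1]] generate a free subgroup of rank 2 in SL_2(ℤ), i.e., the homomorphism from the free group on two generators to SL_2(ℤ) sending the generators to α and β respectively is injective. -/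
open Matrix

/-- The matrix `β = [[1,0],[N,1]] ∈ SL_2(ℤ)`. -/
def betaMat (N : ℤ) : SL 2 ℤ := ⟨!![1, 0; N, 1], by rw [Matrix.det_fin_two_of]; ring⟩

/-!
`SL_2(ℤ)` acts on the upper half plane, `α` by `z ↦ z + 1` and `β` by `z ↦ z / (N z + 1)`, that is,
by translating `1 / z` by `N`. Play ping-pong with the sets `Re z ≥ 1/2`, `Re z < -1/2` for `α^{±1}`
and `Re (1/z) ≥ 2`, `Re (1/z) < -2` for `β^{±1}`. They are disjoint because
`|Re z| * |Re (1/z)| = Re z ^ 2 / |z| ^ 2 < 1`, and `N ≥ 4` is what makes `β` jump over the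
strip `|Re (1/z)| < 2`.
-/

universe u

open UpperHalfPlane
open scoped Pointwise

section PingPong

variable {G : Type u} {X : Type*} [Group G] [MulAction G X]

theorem smul_compl_setOf_lt_neg_subset {g : G} {f : X → ℝ} {c : ℝ}
    (hg : ∀ x, f x + 2 * c ≤ f (g • x)) : g • {x | f x < -c}ᶜ ⊆ {x | c ≤ f x} := by
  refine Set.smul_set_subset_iff.2 fun x hx => ?_
  simp only [Set.mem_compl_iff, Set.mem_ofPred_eq, not_lt] at hx ⊢
  linarith [hg x]

theorem inv_smul_compl_setOf_le_subset {g : G} {f : X → ℝ} {c : ℝ}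
    (hg : ∀ x, f x + 2 * c ≤ f (g • x)) : g⁻¹ • {x | c ≤ f x}ᶜ ⊆ {x | f x < -c} := by
  refine Set.smul_set_subset_iff.2 fun x hx => ?_
  simp only [Set.mem_compl_iff, Set.mem_ofPred_eq, not_le] at hx ⊢
  have := hg (g⁻¹ • x)
  rw [smul_inv_smul] at this
  linarith

/-- Ping-pong with the sets `{c i ≤ f i}` and `{f i < -c i}`. -/
theorem FreeGroup.injective_lift_of_ping_pong_of_le_apply_smul {ι : Type u} [Nontrivial ι]
    (a : ι → G) (f : ι → X → ℝ) (c : ι → ℝ) (x₀ : X) (hx₀ : ∀ i, |f i x₀| < c i)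
    (ha : ∀ i x, f i x + 2 * c i ≤ f i (a i • x))
    (hsep : ∀ x i j, i ≠ j → c i ≤ |f i x| → |f j x| < c j) :
    Function.Injective (FreeGroup.lift a) := by
  have hX (i : ι) (x : X) (h : c i ≤ f i x) : c i ≤ |f i x| := le_abs.2 (.inl h)
  have hY (i : ι) (x : X) (h : f i x < -c i) : c i ≤ |f i x| := le_abs.2 (.inr (by linarith))
  have hdisj {i j : ι} (hij : i ≠ j) {x : X} (hi : c i ≤ |f i x|) (hj : c j ≤ |f j x|) : False :=
    (hsep x i j hij hi).not_ge hj
  refine FreeGroup.injective_lift_of_ping_pong a (fun i => {x | c i ≤ f i x})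
    (fun i => {x | f i x < -c i}) (fun i => ⟨a i • x₀, smul_compl_setOf_lt_neg_subset (ha i)
      (Set.smul_mem_smul_set (neg_lt_of_abs_lt (hx₀ i)).not_gt)⟩)
    (fun i j hij => Set.disjoint_left.2 fun x hi hj => hdisj hij (hX i x hi) (hX j x hj))
    (fun i j hij => Set.disjoint_left.2 fun x hi hj => hdisj hij (hY i x hi) (hY j x hj))
    (fun i j => Set.disjoint_left.2 fun x hi hj => ?_)
    (fun i => smul_compl_setOf_lt_neg_subset (ha i))
    (fun i => inv_smul_compl_setOf_le_subset (ha i))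
  by_cases hij : i = j
  · subst hij
    linarith [(abs_nonneg _).trans_lt (hx₀ i), show c i ≤ f i x from hi, show f i x < -c i from hj]
  · exact hdisj hij (hX i x hi) (hY j x hj)

end PingPong

theorem UpperHalfPlane.abs_re_mul_abs_inv_re_lt_one (z : ℍ) : |z.re| * |(z : ℂ)⁻¹.re| < 1 := by
  have hpos := Complex.normSq_pos.2 z.ne_zero
  rw [← abs_mul, Complex.inv_re, ← mul_div_assoc, coe_re, abs_div, abs_mul_self, abs_of_pos hpos,
    div_lt_one hpos, Complex.normSq_apply, coe_re, coe_im]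
  nlinarith [z.im_pos]

theorem re_alphaMat_smul (z : ℍ) : (alphaMat • z).re = z.re + 1 := by
  rw [show alphaMat = ModularGroup.T from rfl, modular_T_smul]
  simp [add_comm]

theorem inv_coe_betaMat_smul (N : ℤ) (z : ℍ) : ((betaMat N • z : ℍ) : ℂ)⁻¹ = (z : ℂ)⁻¹ + N := by
  rw [coe_specialLinearGroup_apply]
  have hz := z.ne_zero
  simp only [algebraMap_int_eq, eq_intCast, betaMat, of_apply, cons_val', cons_val_zero,
    cons_val_one, cons_val_fin_one, Int.cast_zero, Int.cast_one, Complex.ofReal_zero,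
    Complex.ofReal_one, Complex.ofReal_intCast, one_mul, add_zero, inv_div]
  field_simp
  ring

/-- For an integer `N ≥ 4`, the matrices `α = [[1,1],[0,1]]` and `β = [[1,0],[N,1]]`
generate a free subgroup of rank `2` in `SL_2(ℤ)`: the homomorphism from the free group on
two generators to `SL_2(ℤ)` sending the generators to `α` and `β` is injective. -/
theorem alpha_beta_free (N : ℤ) (hN : 4 ≤ N) :
    Function.Injective ⇑(FreeGroup.lift ![alphaMat, betaMat N] : FreeGroup (Fin 2) →* SL 2 ℤ) := by
  refine FreeGroup.injective_lift_of_ping_pong_of_le_apply_smul _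
    ![re, fun z => (z : ℂ)⁻¹.re] ![1 / 2, 2] I
    (fun i => by fin_cases i <;> norm_num) (fun i z => ?_) (fun z i j hij hi => ?_)
  · fin_cases i
    · show z.re + 2 * (1 / 2) ≤ (alphaMat • z).re
      rw [re_alphaMat_smul]
      norm_num
    · show (z : ℂ)⁻¹.re + 2 * 2 ≤ ((betaMat N • z : ℍ) : ℂ)⁻¹.re
      rw [inv_coe_betaMat_smul, Complex.add_re, Complex.intCast_re]
      linarith [show (4 : ℝ) ≤ N by exact_mod_cast hN]
  · have hz := abs_re_mul_abs_inv_re_lt_one z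
    fin_cases i <;> fin_cases j <;> simp only [ne_eq, not_true_eq_false] at hij
    · change 1 / 2 ≤ |z.re| at hi
      show |(z : ℂ)⁻¹.re| < 2
      nlinarith
    · change 2 ≤ |(z : ℂ)⁻¹.re| at hi
      show |z.re| < 1 / 2
      nlinarith
end
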